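/- arXiv:2004.11630 — 8 statements merged into one kernel-verified Lean document; each statement's English description precedes it below -/
import Mathlib

section
/- (Lemma 1.) Suppose the input sequence u(0),…,u(T−1) and state sequence x(0),…,x(T) satisfy x(t+1) = A x(t) + B u(t) + D x(t) u(t) for t = 0,…,T−1, and let G_K ∈ ℝ^{T×n} satisfy X_{0,T} G_K = I. Define K = U_{0,T} G_K ∈ ℝ^{1×n}. Then for every x ∈ ℝⁿ, A x + B (K x) + D x (K x) = (X_{1,T} − D V_{0,T} + D x U_{0,T}) G_K x; that is, the closed-loop system x⁺ = A x + B(Kx) + D x (Kx) has the equivalent representation x⁺ = g_D(x) x with g_D(x) := (X_{1,T} − D V_{0,T} + D x U_{0,T}) G_K. -/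
open Matrix

/-- Lemma 1: if `X₀ G_K = I` and `K = U₀ G_K`, the closed loop
`x⁺ = A x + B (K x) + D x (K x)` has the data-based representation
`x⁺ = (X₁ − D V₀ + D x U₀) G_K x`. -/
theorem closed_loop_data_representation {n T : ℕ} (hn : 0 < n) (hT : 0 < T)
    (A : Matrix (Fin n) (Fin n) ℝ) (B : Matrix (Fin n) (Fin 1) ℝ)
    (D : Matrix (Fin n) (Fin n) ℝ)
    (u : ℕ → ℝ) (x : ℕ → Matrix (Fin n) (Fin 1) ℝ)
    (hdyn : ∀ t < T, x (t + 1) = A * x t + u t • B + u t • (D * x t))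
    (U₀ : Matrix (Fin 1) (Fin T) ℝ)
    (hU₀ : U₀ = Matrix.of fun (_ : Fin 1) (t : Fin T) => u t)
    (X₀ : Matrix (Fin n) (Fin T) ℝ)
    (hX₀ : X₀ = Matrix.of fun (i : Fin n) (t : Fin T) => x t i 0)
    (X₁ : Matrix (Fin n) (Fin T) ℝ)
    (hX₁ : X₁ = Matrix.of fun (i : Fin n) (t : Fin T) => x (t + 1) i 0)
    (V₀ : Matrix (Fin n) (Fin T) ℝ)
    (hV₀ : V₀ = Matrix.of fun (i : Fin n) (t : Fin T) => x t i 0 * u t)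
    (G_K : Matrix (Fin T) (Fin n) ℝ) (hG : X₀ * G_K = 1)
    (K : Matrix (Fin 1) (Fin n) ℝ) (hK : K = U₀ * G_K) :
    ∀ y : Matrix (Fin n) (Fin 1) ℝ,
      A * y + B * (K * y) + D * y * (K * y)
        = (X₁ - D * V₀ + D * y * U₀) * G_K * y := by
  intro y
  have hX1 : X₁ = A * X₀ + B * U₀ + D * V₀ := by
    subst hU₀ hX₀ hX₁ hV₀
    ext i t
    have ht : (t : ℕ) < T := t.isLt
    simp only [Matrix.of_apply]
    rw [hdyn t ht]
    simp [Matrix.mul_apply, Matrix.add_apply, Matrix.smul_apply, Fin.sum_univ_succ,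
      mul_comm, mul_left_comm, Finset.mul_sum]
  have key : X₁ - D * V₀ + D * y * U₀ = A * X₀ + B * U₀ + D * y * U₀ := by
    rw [hX1]; abel
  rw [key, hK]
  rw [Matrix.add_mul, Matrix.add_mul, Matrix.add_mul, Matrix.add_mul]
  rw [Matrix.mul_assoc A X₀ G_K, hG, Matrix.mul_one]
  rw [Matrix.mul_assoc B U₀ G_K, Matrix.mul_assoc (D*y) U₀ G_K]
  rw [Matrix.mul_assoc B (U₀*G_K) y, Matrix.mul_assoc (D*y) (U₀*G_K) y]
end

section
/- (Lemma 3.) Let Q = Qᵀ ∈ ℝ^{n×n} be positive definite and τ > 0. If the 4×4 block matrix [[−Q, 0, 𝒦ᵀ, (𝒜_c + ℱ D ℋ)ᵀ], [0, −τQ, 0, Dᵀ], [𝒦, 0, −(1/τ)I, 0], [𝒜_c + ℱ D ℋ, D, 0, −Q⁻¹]] is negative definite, then 𝒩_D(x) ≺ 0 for all x ∈ ℰ_Q := {x ∈ ℝⁿ : xᵀ Q x ≤ 1}. -/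
open Matrix

/-- The 4×4 block matrix, with blocks of sizes `[n, n, 1, n]`,
`[[−Q, 0, 𝒦ᵀ, (𝒜c + ℱDℋ)ᵀ], [0, −τQ, 0, Dᵀ], [𝒦, 0, −(1/τ)I, 0],
[𝒜c + ℱDℋ, D, 0, −Q⁻¹]]`. -/
noncomputable def blockMat4 {n : ℕ}
    (Q D Ac F H : Matrix (Fin n) (Fin n) ℝ) (K : Matrix (Fin 1) (Fin n) ℝ)
    (τ : ℝ) :
    Matrix ((Fin n ⊕ Fin n) ⊕ (Fin 1 ⊕ Fin n)) ((Fin n ⊕ Fin n) ⊕ (Fin 1 ⊕ Fin n)) ℝ :=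
  Matrix.fromBlocks
    (Matrix.fromBlocks (-Q) 0 0 (-(τ • Q)))
    (Matrix.fromBlocks Kᵀ (Ac + F * D * H)ᵀ 0 Dᵀ)
    (Matrix.fromBlocks K 0 (Ac + F * D * H) D)
    (Matrix.fromBlocks (-((1 / τ) • (1 : Matrix (Fin 1) (Fin 1) ℝ))) 0 0 (-Q⁻¹))

/-!
Write `P = 𝒜c + ℱDℋ + D x 𝒦`, so that `𝒩_D(x) = Pᵀ Q P - Q`. For `z ≠ 0` and `k = 𝒦 z`,
evaluate the form of the block matrix `M` at `v = (z, k x, τ k, Q P z)`: the cross terms cancel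
against the diagonal ones and leave `vᵀ M v = (Pz)ᵀ Q (Pz) - zᵀ Q z + τ k² (1 - xᵀ Q x)`.
Negative definiteness of `M` makes this negative, and on `ℰ_Q` the last summand is nonnegative,
so `zᵀ 𝒩_D(x) z < 0`.
-/

namespace Matrix

variable {n : Type*} [Fintype n]

theorem posDef_sub_transpose_mul_mul {Q : Matrix n n ℝ} (hQ : Q.IsHermitian) (P : Matrix n n ℝ)
    (hlt : ∀ z : n → ℝ, z ≠ 0 → (P *ᵥ z) ⬝ᵥ (Q *ᵥ (P *ᵥ z)) < z ⬝ᵥ (Q *ᵥ z)) :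
    (Q - Pᵀ * Q * P).PosDef := by
  refine posDef_iff_dotProduct_mulVec.2 ⟨hQ.sub ?_, fun z hz => ?_⟩
  · simpa only [conjTranspose_eq_transpose_of_trivial] using isHermitian_conjTranspose_mul_mul P hQ
  · rw [star_trivial, sub_mulVec, dotProduct_sub, sub_pos, ← mulVec_mulVec, ← mulVec_mulVec,
      dotProduct_transpose_mulVec, dotProduct_comm]
    exact hlt z hz

theorem mulVec_dotProduct_mulVec_mulVec_fin_one {R : Type*} [CommRing R] (Q : Matrix n n R)
    (x : Matrix n (Fin 1) R) (k : Fin 1 → R) :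
    (x *ᵥ k) ⬝ᵥ (Q *ᵥ (x *ᵥ k)) = (xᵀ * Q * x) 0 0 * k 0 ^ 2 := by
  rw [dotProduct_comm, ← dotProduct_transpose_mulVec x, mulVec_mulVec, mulVec_mulVec]
  simp only [dotProduct, mulVec, Finset.univ_unique, Fin.default_eq_zero, Finset.sum_singleton]
  ring

end Matrix

section BlockMat4

variable {n : ℕ} (Q D Ac F H : Matrix (Fin n) (Fin n) ℝ) (K : Matrix (Fin 1) (Fin n) ℝ) (τ : ℝ)

theorem dotProduct_blockMat4_mulVec (z b d : Fin n → ℝ) (c : Fin 1 → ℝ) :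
    Sum.elim (Sum.elim z b) (Sum.elim c d) ⬝ᵥ
        (blockMat4 Q D Ac F H K τ *ᵥ Sum.elim (Sum.elim z b) (Sum.elim c d)) =
      -(z ⬝ᵥ (Q *ᵥ z)) - τ * (b ⬝ᵥ (Q *ᵥ b))
        + 2 * ((K *ᵥ z) ⬝ᵥ c + ((Ac + F * D * H) *ᵥ z + D *ᵥ b) ⬝ᵥ d)
        - (1 / τ) * (c ⬝ᵥ c) - d ⬝ᵥ (Q⁻¹ *ᵥ d) := by
  simp only [blockMat4, sumElim_dotProduct_sumElim, fromBlocks_mulVec, Sum.elim_comp_inl,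
    Sum.elim_comp_inr, neg_mulVec, smul_mulVec, one_mulVec, zero_mulVec, dotProduct_add,
    add_dotProduct, dotProduct_neg, dotProduct_smul, dotProduct_zero, dotProduct_transpose_mulVec,
    smul_eq_mul]
  rw [dotProduct_comm c (K *ᵥ z), dotProduct_comm d, dotProduct_comm d]
  ring

def blockMat4TestVector (x : Matrix (Fin n) (Fin 1) ℝ) (z : Fin n → ℝ) :
    (Fin n ⊕ Fin n) ⊕ (Fin 1 ⊕ Fin n) → ℝ :=
  Sum.elim (Sum.elim z (x *ᵥ (K *ᵥ z)))
    (Sum.elim (τ • (K *ᵥ z)) (Q *ᵥ ((Ac + F * D * H + D * x * K) *ᵥ z)))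

theorem blockMat4TestVector_ne_zero (x : Matrix (Fin n) (Fin 1) ℝ) {z : Fin n → ℝ} (hz : z ≠ 0) :
    blockMat4TestVector Q D Ac F H K τ x z ≠ 0 :=
  fun h => hz (funext fun i => congrFun h (Sum.inl (Sum.inl i)))

theorem dotProduct_blockMat4_mulVec_testVector (hQ : IsUnit Q.det) (hτ : τ ≠ 0)
    (x : Matrix (Fin n) (Fin 1) ℝ) (z : Fin n → ℝ) :
    blockMat4TestVector Q D Ac F H K τ x z ⬝ᵥ
        (blockMat4 Q D Ac F H K τ *ᵥ blockMat4TestVector Q D Ac F H K τ x z) =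
      ((Ac + F * D * H + D * x * K) *ᵥ z) ⬝ᵥ (Q *ᵥ ((Ac + F * D * H + D * x * K) *ᵥ z))
        - z ⬝ᵥ (Q *ᵥ z) + τ * (1 - (xᵀ * Q * x) 0 0) * (K *ᵥ z) 0 ^ 2 := by
  rw [blockMat4TestVector, dotProduct_blockMat4_mulVec]
  set w := (Ac + F * D * H + D * x * K) *ᵥ z
  set k := K *ᵥ z
  have hw : (Ac + F * D * H) *ᵥ z + D *ᵥ (x *ᵥ k) = w := by
    simp only [w, k, add_mulVec, ← mulVec_mulVec]
  have hQinv : Q⁻¹ *ᵥ (Q *ᵥ w) = w := by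
    rw [mulVec_mulVec, nonsing_inv_mul Q hQ, one_mulVec]
  have hk : k ⬝ᵥ k = k 0 ^ 2 := by simp [dotProduct, sq]
  rw [hQinv, mulVec_dotProduct_mulVec_mulVec_fin_one, hw, dotProduct_comm (Q *ᵥ w)]
  simp only [dotProduct_smul, smul_dotProduct, smul_eq_mul, hk]
  rw [one_div, inv_mul_cancel_left₀ hτ]
  ring

end BlockMat4

theorem negdef_on_ellipsoid_general {n : ℕ}
    (Q : Matrix (Fin n) (Fin n) ℝ) (hQpd : Q.PosDef)
    (τ : ℝ) (hτ : 0 < τ)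
    (D Ac : Matrix (Fin n) (Fin n) ℝ)
    (F : Matrix (Fin n) (Fin n) ℝ)
    (H : Matrix (Fin n) (Fin n) ℝ)
    (K : Matrix (Fin 1) (Fin n) ℝ)
    (N : Matrix (Fin n) (Fin 1) ℝ → Matrix (Fin n) (Fin n) ℝ)
    (hN : ∀ x : Matrix (Fin n) (Fin 1) ℝ,
      N x = (Ac + F * D * H)ᵀ * Q * (Ac + F * D * H) - Q
        + (Ac + F * D * H)ᵀ * Q * (D * x * K)
        + Kᵀ * xᵀ * Dᵀ * Q * (Ac + F * D * H)
        + Kᵀ * xᵀ * Dᵀ * Q * (D * x * K))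
    (hblock : (-(blockMat4 Q D Ac F H K τ)).PosDef) :
    ∀ x : Matrix (Fin n) (Fin 1) ℝ, (xᵀ * Q * x) 0 0 ≤ 1 →
      (-(N x)).PosDef := by
  intro x hx
  set P := Ac + F * D * H + D * x * K
  have hNx : -(N x) = Q - Pᵀ * Q * P := by
    simp only [hN, P, transpose_add, transpose_mul, Matrix.add_mul, Matrix.mul_add,
      Matrix.mul_assoc]
    abel
  rw [hNx]
  refine posDef_sub_transpose_mul_mul hQpd.isHermitian P fun z hz => ?_
  have hform := (posDef_iff_dotProduct_mulVec.1 hblock).2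
    (blockMat4TestVector_ne_zero Q D Ac F H K τ x hz)
  rw [star_trivial, neg_mulVec, dotProduct_neg, neg_pos, dotProduct_blockMat4_mulVec_testVector
    Q D Ac F H K τ ((isUnit_iff_isUnit_det Q).1 hQpd.isUnit) hτ.ne'] at hform
  have hS : 0 ≤ τ * (1 - (xᵀ * Q * x) 0 0) * (K *ᵥ z) 0 ^ 2 :=
    mul_nonneg (mul_nonneg hτ.le (sub_nonneg.2 hx)) (sq_nonneg _)
  linarith

/-- Lemma 3: if the 4×4 block matrix is negative definite, then
`𝒩_D(x) ≺ 0` for all `x` in the ellipsoid `ℰ_Q = {x : xᵀ Q x ≤ 1}`. -/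
theorem negdef_on_ellipsoid {n : ℕ} (hn : 0 < n)
    (Q : Matrix (Fin n) (Fin n) ℝ) (hQsym : Q = Qᵀ) (hQpd : Q.PosDef)
    (τ : ℝ) (hτ : 0 < τ)
    (D Ac : Matrix (Fin n) (Fin n) ℝ)
    (F : Matrix (Fin n) (Fin n) ℝ) (hF : F = 1)
    (H : Matrix (Fin n) (Fin n) ℝ)
    (K : Matrix (Fin 1) (Fin n) ℝ)
    (N : Matrix (Fin n) (Fin 1) ℝ → Matrix (Fin n) (Fin n) ℝ)
    (hN : ∀ x : Matrix (Fin n) (Fin 1) ℝ,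
      N x = (Ac + F * D * H)ᵀ * Q * (Ac + F * D * H) - Q
        + (Ac + F * D * H)ᵀ * Q * (D * x * K)
        + Kᵀ * xᵀ * Dᵀ * Q * (Ac + F * D * H)
        + Kᵀ * xᵀ * Dᵀ * Q * (D * x * K))
    (hblock : (-(blockMat4 Q D Ac F H K τ)).PosDef) :
    ∀ x : Matrix (Fin n) (Fin 1) ℝ, (xᵀ * Q * x) 0 0 ≤ 1 →
      (-(N x)).PosDef :=
  negdef_on_ellipsoid_general Q hQpd τ hτ D Ac F H K N hN hblock
end

section
/- (Lemma 4.) Let δ > 0, let Q = Qᵀ ∈ ℝ^{n×n} be positive definite, τ > 0, and let 𝒜_c ∈ ℝ^{n×n}, ℱ = I, ℋ ∈ ℝ^{n×n}, 𝒦 ∈ ℝ^{1×n}. If there exists ε₂ ∈ ℝ such that the 5×5 block matrix [[−Q, 0, 𝒦ᵀ, 𝒜_cᵀ, δℋᵀ], [0, −τQ, 0, 0, δI], [𝒦, 0, −(1/τ)I, 0, 0], [𝒜_c, 0, 0, −Q⁻¹ + ε₂I, 0], [δℋ, δI, 0, 0, −ε₂I]] is negative definite, then for every D ∈ ℝ^{n×n}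 with ‖D‖ ≤ δ the 4×4 block matrix [[−Q, 0, 𝒦ᵀ, (𝒜_c + ℱ D ℋ)ᵀ], [0, −τQ, 0, Dᵀ], [𝒦, 0, −(1/τ)I, 0], [𝒜_c + ℱ D ℋ, D, 0, −Q⁻¹]] is negative definite. -/
open Matrix
open scoped Matrix.Norms.L2Operator

/-- The 5×5 block matrix, with blocks of sizes `[n, n, 1, n, n]`,
`[[−Q, 0, 𝒦ᵀ, 𝒜cᵀ, δℋᵀ], [0, −τQ, 0, 0, δI], [𝒦, 0, −(1/τ)I, 0, 0],
[𝒜c, 0, 0, −Q⁻¹ + ε₂I, 0], [δℋ, δI, 0, 0, −ε₂I]]`. -/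
noncomputable def blockMat5 {n : ℕ}
    (Q Ac H : Matrix (Fin n) (Fin n) ℝ) (K : Matrix (Fin 1) (Fin n) ℝ)
    (τ δ ε₂ : ℝ) :
    Matrix (((Fin n ⊕ Fin n) ⊕ (Fin 1 ⊕ Fin n)) ⊕ Fin n)
      (((Fin n ⊕ Fin n) ⊕ (Fin 1 ⊕ Fin n)) ⊕ Fin n) ℝ :=
  Matrix.fromBlocks
    (Matrix.fromBlocks
      (Matrix.fromBlocks (-Q) 0 0 (-(τ • Q)))
      (Matrix.fromBlocks Kᵀ Acᵀ 0 0)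
      (Matrix.fromBlocks K 0 Ac 0)
      (Matrix.fromBlocks (-((1 / τ) • (1 : Matrix (Fin 1) (Fin 1) ℝ))) 0 0
        (-Q⁻¹ + ε₂ • (1 : Matrix (Fin n) (Fin n) ℝ))))
    (Matrix.fromRows
      (Matrix.fromRows (δ • Hᵀ) (δ • (1 : Matrix (Fin n) (Fin n) ℝ)))
      (Matrix.fromRows (0 : Matrix (Fin 1) (Fin n) ℝ) (0 : Matrix (Fin n) (Fin n) ℝ)))
    (Matrix.fromCols
      (Matrix.fromCols (δ • H) (δ • (1 : Matrix (Fin n) (Fin n) ℝ)))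
      (Matrix.fromCols (0 : Matrix (Fin n) (Fin 1) ℝ) (0 : Matrix (Fin n) (Fin n) ℝ)))
    (-(ε₂ • (1 : Matrix (Fin n) (Fin n) ℝ)))

/-! Write `L = [0 0 0 I]` and `R = [H I 0 0]`. The 4×4 matrix is the nominal one (`D = 0`) plus
`LᵀDR + RᵀDᵀL`, and the 5×5 matrix is the nominal one plus `ε₂LᵀL`, bordered by `δR` and `−ε₂I`.
Evaluating the 5×5 form at `(x, (δ/ε₂)Rx)` gives `−xᵀM₀x > ε₂|Lx|² + (δ²/ε₂)|Rx|²`, and by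
Cauchy–Schwarz and AM–GM the right-hand side dominates `2(Lx)ᵀD(Rx)` whenever `‖D‖ ≤ δ`. -/

theorem dotProduct_self_eq_norm_toLp_sq {ι : Type*} [Fintype ι] (v : ι → ℝ) :
    v ⬝ᵥ v = ‖WithLp.toLp 2 v‖ ^ 2 := by
  rw [← real_inner_self_eq_norm_sq, EuclideanSpace.inner_toLp_toLp, star_trivial]

theorem dotProduct_transpose_mul_mulVec {ι k l R : Type*} [Fintype ι] [Fintype k] [Fintype l]
    [CommSemiring R] (A : Matrix k ι R) (B : Matrix k l R) (x : ι → R) (y : l → R) :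
    x ⬝ᵥ (Aᵀ * B) *ᵥ y = A *ᵥ x ⬝ᵥ B *ᵥ y := by
  rw [← mulVec_mulVec, dotProduct_mulVec, vecMul_transpose]

theorem pos_of_posDef_neg_fromBlocks_neg_smul_one {ι p : Type*} [Fintype ι] [Fintype p]
    [DecidableEq p] [Nonempty p] {A : Matrix ι ι ℝ} {B : Matrix ι p ℝ} {C : Matrix p ι ℝ}
    {ε : ℝ} (h : (-(fromBlocks A B C (-(ε • 1)))).PosDef) : 0 < ε := by
  obtain ⟨i⟩ := ‹Nonempty p›
  simpa using (h.submatrix Sum.inr_injective).diag_pos (i := i)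

section PerturbationBound

variable {ι m p : Type*} [Fintype ι] [Fintype m] [Fintype p] [DecidableEq p]

theorem dotProduct_mulVec_le_of_l2_opNorm_le {D : Matrix m p ℝ} {δ : ℝ} (hD : ‖D‖ ≤ δ)
    (e : m → ℝ) (z : p → ℝ) :
    e ⬝ᵥ D *ᵥ z ≤ ‖WithLp.toLp 2 e‖ * (δ * ‖WithLp.toLp 2 z‖) :=
  calc e ⬝ᵥ D *ᵥ z = inner ℝ (WithLp.toLp 2 e) (WithLp.toLp 2 (D *ᵥ z)) := by
        rw [EuclideanSpace.inner_toLp_toLp, star_trivial, dotProduct_comm]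
    _ ≤ ‖WithLp.toLp 2 e‖ * ‖WithLp.toLp 2 (D *ᵥ z)‖ := real_inner_le_norm _ _
    _ ≤ ‖WithLp.toLp 2 e‖ * (δ * ‖WithLp.toLp 2 z‖) := by
        gcongr
        exact (D.l2_opNorm_mulVec _).trans (by gcongr)

theorem two_mul_dotProduct_mulVec_le {D : Matrix m p ℝ} {δ ε : ℝ} (hD : ‖D‖ ≤ δ) (hε : 0 < ε)
    (e : m → ℝ) (z : p → ℝ) :
    2 * (e ⬝ᵥ D *ᵥ z) ≤ ε * (e ⬝ᵥ e) + δ ^ 2 / ε * (z ⬝ᵥ z) := by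
  set a := ‖WithLp.toLp 2 e‖
  set b := ‖WithLp.toLp 2 z‖
  have amgm : 2 * (a * (δ * b)) ≤ ε * a ^ 2 + δ ^ 2 / ε * b ^ 2 := by
    have : 0 ≤ (ε * a - δ * b) ^ 2 / ε := by positivity
    rw [sub_sq, add_div, sub_div] at this
    field_simp at this ⊢
    linarith
  rw [dotProduct_self_eq_norm_toLp_sq e, dotProduct_self_eq_norm_toLp_sq z]
  linarith [dotProduct_mulVec_le_of_l2_opNorm_le hD e z]

theorem posDef_neg_add_of_posDef_neg_fromBlocks {M : Matrix ι ι ℝ} {L : Matrix m ι ℝ}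
    {R : Matrix p ι ℝ} {D : Matrix m p ℝ} {δ ε : ℝ} (hD : ‖D‖ ≤ δ) (hε : 0 < ε)
    (h : (-(fromBlocks (M + ε • (Lᵀ * L)) (δ • Rᵀ) (δ • R) (-(ε • 1)))).PosDef) :
    (-(M + Lᵀ * D * R + Rᵀ * Dᵀ * L)).PosDef := by
  have hM : M.IsHermitian := by
    have hME := (isHermitian_fromBlocks_iff.mp (isHermitian_neg_iff.mp h.1)).1
    simpa using hME.sub ((isHermitian_conjTranspose_mul_self L).smul (IsSelfAdjoint.all ε))
  refine .of_dotProduct_mulVec_pos ?_ fun x hx => ?_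
  · rw [add_assoc]
    refine (hM.add ?_).neg
    convert isHermitian_add_transpose_self (Lᵀ * D * R) using 2
    simp [Matrix.mul_assoc]
  have hLDR : x ⬝ᵥ (Lᵀ * D * R) *ᵥ x = L *ᵥ x ⬝ᵥ D *ᵥ (R *ᵥ x) := by
    rw [Matrix.mul_assoc, dotProduct_transpose_mul_mulVec, mulVec_mulVec]
  have hRDL : x ⬝ᵥ (Rᵀ * Dᵀ * L) *ᵥ x = L *ᵥ x ⬝ᵥ D *ᵥ (R *ᵥ x) := by
    rw [Matrix.mul_assoc, dotProduct_transpose_mul_mulVec, ← mulVec_mulVec, mulVec_transpose,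
      dotProduct_comm, ← dotProduct_mulVec]
  have hRt : x ⬝ᵥ Rᵀ *ᵥ (R *ᵥ x) = R *ᵥ x ⬝ᵥ R *ᵥ x := by
    rw [dotProduct_mulVec, vecMul_transpose]
  have hxy : Sum.elim x ((δ / ε) • (R *ᵥ x)) ≠ 0 := fun h0 =>
    hx (by simpa using congrArg (· ∘ Sum.inl) h0)
  have hblock := h.dotProduct_mulVec_pos hxy
  simp only [star_trivial, neg_mulVec, dotProduct_neg, fromBlocks_mulVec,
    sumElim_dotProduct_sumElim, add_mulVec, dotProduct_add, smul_mulVec, mulVec_smul,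
    dotProduct_smul, smul_dotProduct, smul_eq_mul, Sum.elim_comp_inl, Sum.elim_comp_inr,
    one_mulVec, dotProduct_transpose_mul_mulVec, hRt, hLDR, hRDL] at hblock ⊢
  have hnominal : x ⬝ᵥ M *ᵥ x + ε * (L *ᵥ x ⬝ᵥ L *ᵥ x) + δ ^ 2 / ε * (R *ᵥ x ⬝ᵥ R *ᵥ x) < 0 := by
    refine lt_of_eq_of_lt ?_ (neg_pos.mp hblock)
    field_simp
    ring
  linarith [two_mul_dotProduct_mulVec_le hD hε (L *ᵥ x) (R *ᵥ x)]

end PerturbationBound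

noncomputable def perturbationLeft (n : ℕ) :
    Matrix (Fin n) ((Fin n ⊕ Fin n) ⊕ (Fin 1 ⊕ Fin n)) ℝ :=
  fromCols 0 (fromCols 0 1)

noncomputable def perturbationRight {n : ℕ} (H : Matrix (Fin n) (Fin n) ℝ) :
    Matrix (Fin n) ((Fin n ⊕ Fin n) ⊕ (Fin 1 ⊕ Fin n)) ℝ :=
  fromCols (fromCols H 1) 0

theorem blockMat4_eq_add {n : ℕ} (Q D Ac H : Matrix (Fin n) (Fin n) ℝ)
    (K : Matrix (Fin 1) (Fin n) ℝ) (τ : ℝ) :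
    blockMat4 Q D Ac 1 H K τ = blockMat4 Q 0 Ac 1 H K τ +
      (perturbationLeft n)ᵀ * D * perturbationRight H +
      (perturbationRight H)ᵀ * Dᵀ * perturbationLeft n := by
  ext ((i | i) | (i | i)) ((j | j) | (j | j)) <;>
    simp [blockMat4, perturbationLeft, perturbationRight, Matrix.mul_apply, one_apply]

theorem blockMat5_eq_fromBlocks {n : ℕ} (Q Ac H : Matrix (Fin n) (Fin n) ℝ)
    (K : Matrix (Fin 1) (Fin n) ℝ) (τ δ ε : ℝ) :
    blockMat5 Q Ac H K τ δ ε = fromBlocks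
      (blockMat4 Q 0 Ac 1 H K τ + ε • ((perturbationLeft n)ᵀ * perturbationLeft n))
      (δ • (perturbationRight H)ᵀ) (δ • perturbationRight H) (-(ε • 1)) := by
  ext (((i | i) | (i | i)) | i) (((j | j) | (j | j)) | j) <;>
    simp [blockMat5, blockMat4, perturbationLeft, perturbationRight, one_apply, eq_comm]

theorem robustification_general {n : ℕ} (hn : 0 < n)
    (δ : ℝ)
    (Q : Matrix (Fin n) (Fin n) ℝ)
    (τ : ℝ)
    (Ac : Matrix (Fin n) (Fin n) ℝ)
    (F : Matrix (Fin n) (Fin n) ℝ) (hF : F = 1)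
    (H : Matrix (Fin n) (Fin n) ℝ)
    (K : Matrix (Fin 1) (Fin n) ℝ)
    (ε₂ : ℝ)
    (hblock5 : (-(blockMat5 Q Ac H K τ δ ε₂)).PosDef) :
    ∀ D : Matrix (Fin n) (Fin n) ℝ, ‖D‖ ≤ δ →
      (-(blockMat4 Q D Ac F H K τ)).PosDef := by
  intro D hD
  subst hF
  have : Nonempty (Fin n) := ⟨⟨0, hn⟩⟩
  rw [blockMat5_eq_fromBlocks] at hblock5
  rw [blockMat4_eq_add]
  exact posDef_neg_add_of_posDef_neg_fromBlocks hD
    (pos_of_posDef_neg_fromBlocks_neg_smul_one hblock5) hblock5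

/-- Lemma 4: if the 5×5 block matrix (depending only on the norm bound `δ`) is
negative definite for some `ε₂`, then the 4×4 block matrix is negative definite
for every `D` with `‖D‖ ≤ δ` (induced 2-norm). -/
theorem robustification {n : ℕ} (hn : 0 < n)
    (δ : ℝ) (hδ : 0 < δ)
    (Q : Matrix (Fin n) (Fin n) ℝ) (hQsym : Q = Qᵀ) (hQpd : Q.PosDef)
    (τ : ℝ) (hτ : 0 < τ)
    (Ac : Matrix (Fin n) (Fin n) ℝ)
    (F : Matrix (Fin n) (Fin n) ℝ) (hF : F = 1)
    (H : Matrix (Fin n) (Fin n) ℝ)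
    (K : Matrix (Fin 1) (Fin n) ℝ)
    (ε₂ : ℝ)
    (hblock5 : (-(blockMat5 Q Ac H K τ δ ε₂)).PosDef) :
    ∀ D : Matrix (Fin n) (Fin n) ℝ, ‖D‖ ≤ δ →
      (-(blockMat4 Q D Ac F H K τ)).PosDef :=
  robustification_general hn δ Q τ Ac F hF H K ε₂ hblock5
end

section
/- Let δ > 0, let P = Pᵀ ∈ ℝ^{n×n} be positive definite, Y ∈ ℝ^{n×T}, ε₁ > 0, ε₂ ∈ ℝ, and let U_{0,T} ∈ ℝ^{1×T}, X_{1,T} ∈ ℝ^{n×T}, V_{0,T} ∈ ℝ^{n×T}. Set Q := P⁻¹, G_K := Yᵀ P⁻¹, τ := 1/ε₁, 𝒜_c := X_{1,T} G_K, ℋ := −V_{0,T} G_K, 𝒦 := U_{0,T} G_K. Then the 5×5 block matrix [[−Q, 0, 𝒦ᵀ, 𝒜_cᵀ, δℋᵀ], [0, −τQ, 0, 0, δI], [𝒦, 0, −(1/τ)I, 0, 0], [𝒜_c, 0, 0, −Q⁻¹ + ε₂I, 0], [δℋ, δI, 0, 0, −ε₂I]] is negative definite if and only if the data-based 5×5 block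 matrix [[−P, 0, Y U_{0,T}ᵀ, Y X_{1,T}ᵀ, −δ Y V_{0,T}ᵀ], [0, −ε₁P, 0, 0, δε₁P], [U_{0,T} Yᵀ, 0, −ε₁I, 0, 0], [X_{1,T} Yᵀ, 0, 0, −P + ε₂I, 0], [−δ V_{0,T} Yᵀ, δε₁P, 0, 0, −ε₂I]] is negative definite. -/
/-!
With `Q = P⁻¹` and `τ = 1/ε₁`, the congruence `M ↦ Cᵀ M C` by the symmetric block-diagonal matrix
`C = diag(P, ε₁P, 1, 1, 1)` sends the model-form matrix to the data-based one: `P Q P = P`,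
`(ε₁P)(τQ)(ε₁P) = ε₁P`, `Q⁻¹ = P`, and `P G_Kᵀ = Y` turns `𝒦ᵀ, 𝒜cᵀ, ℋᵀ` into `YU₀ᵀ, YX₁ᵀ, −YV₀ᵀ`.
Since `P` is invertible and `ε₁ ≠ 0`, `C` is invertible, and congruence by an invertible matrix
preserves positive definiteness.
-/

open Matrix

/-- The data-based 5×5 block matrix, with blocks of sizes `[n, n, 1, n, n]`,
`[[−P, 0, Y U₀ᵀ, Y X₁ᵀ, −δ Y V₀ᵀ], [0, −ε₁P, 0, 0, δε₁P], [U₀ Yᵀ, 0, −ε₁I, 0, 0],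
[X₁ Yᵀ, 0, 0, −P + ε₂I, 0], [−δ V₀ Yᵀ, δε₁P, 0, 0, −ε₂I]]`. -/
def dataBlockMat5 {n T : ℕ}
    (P : Matrix (Fin n) (Fin n) ℝ) (Y : Matrix (Fin n) (Fin T) ℝ)
    (U₀ : Matrix (Fin 1) (Fin T) ℝ) (X₁ V₀ : Matrix (Fin n) (Fin T) ℝ)
    (δ ε₁ ε₂ : ℝ) :
    Matrix (((Fin n ⊕ Fin n) ⊕ (Fin 1 ⊕ Fin n)) ⊕ Fin n)
      (((Fin n ⊕ Fin n) ⊕ (Fin 1 ⊕ Fin n)) ⊕ Fin n) ℝ :=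
  Matrix.fromBlocks
    (Matrix.fromBlocks
      (Matrix.fromBlocks (-P) 0 0 (-(ε₁ • P)))
      (Matrix.fromBlocks (Y * U₀ᵀ) (Y * X₁ᵀ) 0 0)
      (Matrix.fromBlocks (U₀ * Yᵀ) 0 (X₁ * Yᵀ) 0)
      (Matrix.fromBlocks (-(ε₁ • (1 : Matrix (Fin 1) (Fin 1) ℝ))) 0 0
        (-P + ε₂ • (1 : Matrix (Fin n) (Fin n) ℝ))))
    (Matrix.fromRows
      (Matrix.fromRows (-(δ • (Y * V₀ᵀ))) ((δ * ε₁) • P))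
      (Matrix.fromRows (0 : Matrix (Fin 1) (Fin n) ℝ) (0 : Matrix (Fin n) (Fin n) ℝ)))
    (Matrix.fromCols
      (Matrix.fromCols (-(δ • (V₀ * Yᵀ))) ((δ * ε₁) • P))
      (Matrix.fromCols (0 : Matrix (Fin n) (Fin 1) ℝ) (0 : Matrix (Fin n) (Fin n) ℝ)))
    (-(ε₂ • (1 : Matrix (Fin n) (Fin n) ℝ)))

noncomputable def modelToDataCongruence {n : ℕ} (P : Matrix (Fin n) (Fin n) ℝ) (ε₁ : ℝ) :
    Matrix (((Fin n ⊕ Fin n) ⊕ (Fin 1 ⊕ Fin n)) ⊕ Fin n)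
      (((Fin n ⊕ Fin n) ⊕ (Fin 1 ⊕ Fin n)) ⊕ Fin n) ℝ :=
  fromBlocks (fromBlocks (fromBlocks P 0 0 (ε₁ • P)) 0 0 1) 0 0 1

section

variable {n : ℕ} {P : Matrix (Fin n) (Fin n) ℝ} {ε₁ : ℝ}

lemma isUnit_modelToDataCongruence (hPunit : IsUnit P) (hε₁ : ε₁ ≠ 0) :
    IsUnit (modelToDataCongruence P ε₁) := by
  rw [isUnit_iff_isUnit_det] at hPunit ⊢
  simp only [modelToDataCongruence, det_fromBlocks_zero₂₁, det_one, det_smul, mul_one]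
  exact hPunit.mul ((hε₁.isUnit.pow _).mul hPunit)

lemma star_modelToDataCongruence (hPsymm : P.IsSymm) :
    star (modelToDataCongruence P ε₁) = modelToDataCongruence P ε₁ := by
  simp [modelToDataCongruence, star_eq_conjTranspose, conjTranspose_eq_transpose_of_trivial,
    fromBlocks_transpose, hPsymm.eq]

lemma dataBlockMat5_eq_congruence {T : ℕ} (hPsymm : P.IsSymm) (hPunit : IsUnit P) (hε₁ : ε₁ ≠ 0)
    (Y : Matrix (Fin n) (Fin T) ℝ) (U₀ : Matrix (Fin 1) (Fin T) ℝ)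
    (X₁ V₀ : Matrix (Fin n) (Fin T) ℝ) (δ ε₂ : ℝ) :
    dataBlockMat5 P Y U₀ X₁ V₀ δ ε₁ ε₂ =
      star (modelToDataCongruence P ε₁) *
        blockMat5 P⁻¹ (X₁ * (Yᵀ * P⁻¹)) (-(V₀ * (Yᵀ * P⁻¹))) (U₀ * (Yᵀ * P⁻¹)) (1 / ε₁) δ ε₂ *
        modelToDataCongruence P ε₁ := by
  rw [isUnit_iff_isUnit_det] at hPunit
  have hPinv : P⁻¹ᵀ = P⁻¹ := by rw [transpose_nonsing_inv, hPsymm.eq]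
  have hPP : P * P⁻¹ = 1 := mul_nonsing_inv P hPunit
  have hPP' : P⁻¹ * P = 1 := nonsing_inv_mul P hPunit
  have hPPl {k : ℕ} (X : Matrix (Fin n) (Fin k) ℝ) : P * (P⁻¹ * X) = X := by
    rw [← Matrix.mul_assoc, hPP, Matrix.one_mul]
  have hε : 1 / ε₁ * ε₁ = 1 := one_div_mul_cancel hε₁
  rw [star_modelToDataCongruence hPsymm]
  simp only [modelToDataCongruence, blockMat5, dataBlockMat5, fromBlocks_multiply,
    fromBlocks_mul_fromRows, fromCols_mul_fromBlocks,
    Matrix.mul_one, Matrix.one_mul, Matrix.mul_zero, Matrix.zero_mul,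
    add_zero, zero_add, Matrix.neg_mul, Matrix.mul_neg, transpose_mul, hPinv,
    Matrix.mul_smul, Matrix.smul_mul, smul_smul, Matrix.mul_assoc, hPP', hPP,
    transpose_transpose, transpose_neg, hPPl, nonsing_inv_nonsing_inv P hPunit, hε, one_smul,
    smul_zero, neg_zero, smul_neg, one_div_one_div, mul_comm ε₁ δ]

end

theorem model_data_block_equivalence_general {n T : ℕ}
    (δ : ℝ)
    (P : Matrix (Fin n) (Fin n) ℝ) (hPpd : P.PosDef)
    (Y : Matrix (Fin n) (Fin T) ℝ)
    (ε₁ : ℝ) (hε₁ : 0 < ε₁) (ε₂ : ℝ)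
    (U₀ : Matrix (Fin 1) (Fin T) ℝ) (X₁ V₀ : Matrix (Fin n) (Fin T) ℝ)
    (Q : Matrix (Fin n) (Fin n) ℝ) (hQ : Q = P⁻¹)
    (G_K : Matrix (Fin T) (Fin n) ℝ) (hGK : G_K = Yᵀ * P⁻¹)
    (τ : ℝ) (hτ : τ = 1 / ε₁)
    (Ac : Matrix (Fin n) (Fin n) ℝ) (hAc : Ac = X₁ * G_K)
    (H : Matrix (Fin n) (Fin n) ℝ) (hH : H = -(V₀ * G_K))
    (K : Matrix (Fin 1) (Fin n) ℝ) (hK : K = U₀ * G_K) :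
    (-(blockMat5 Q Ac H K τ δ ε₂)).PosDef ↔
      (-(dataBlockMat5 P Y U₀ X₁ V₀ δ ε₁ ε₂)).PosDef := by
  subst hQ hGK hτ hAc hH hK
  have hPsymm : P.IsSymm := isHermitian_iff_isSymm.mp hPpd.isHermitian
  have hPunit : IsUnit P := (isUnit_iff_isUnit_det P).mpr hPpd.det_pos.ne'.isUnit
  rw [dataBlockMat5_eq_congruence hPsymm hPunit hε₁.ne']
  refine (isUnit_modelToDataCongruence hPunit hε₁.ne').posDef_star_left_conjugate_iff.symm.trans ?_
  rw [Matrix.mul_neg, Matrix.neg_mul]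

/-- Congruence step in the proof of Proposition 1: the model-form 5×5 block
matrix is negative definite iff the data-based 5×5 block matrix is. -/
theorem model_data_block_equivalence {n T : ℕ} (hn : 0 < n) (hT : 0 < T)
    (δ : ℝ) (hδ : 0 < δ)
    (P : Matrix (Fin n) (Fin n) ℝ) (hPsym : P = Pᵀ) (hPpd : P.PosDef)
    (Y : Matrix (Fin n) (Fin T) ℝ)
    (ε₁ : ℝ) (hε₁ : 0 < ε₁) (ε₂ : ℝ)
    (U₀ : Matrix (Fin 1) (Fin T) ℝ) (X₁ V₀ : Matrix (Fin n) (Fin T) ℝ)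
    (Q : Matrix (Fin n) (Fin n) ℝ) (hQ : Q = P⁻¹)
    (G_K : Matrix (Fin T) (Fin n) ℝ) (hGK : G_K = Yᵀ * P⁻¹)
    (τ : ℝ) (hτ : τ = 1 / ε₁)
    (Ac : Matrix (Fin n) (Fin n) ℝ) (hAc : Ac = X₁ * G_K)
    (H : Matrix (Fin n) (Fin n) ℝ) (hH : H = -(V₀ * G_K))
    (K : Matrix (Fin 1) (Fin n) ℝ) (hK : K = U₀ * G_K) :
    (-(blockMat5 Q Ac H K τ δ ε₂)).PosDef ↔
      (-(dataBlockMat5 P Y U₀ X₁ V₀ δ ε₁ ε₂)).PosDef :=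
  model_data_block_equivalence_general δ P hPpd Y ε₁ hε₁ ε₂ U₀ X₁ V₀ Q hQ G_K hGK τ hτ Ac hAc H hH K
    hK
end

section
/- (Proposition 1, part (i).) Suppose ‖D‖ ≤ δ for a known δ > 0, and suppose there exist ε₁ ∈ ℝ, ε₂ ∈ ℝ, Y ∈ ℝ^{n×T}, and P = Pᵀ ∈ ℝ^{n×n} such that the block matrix [[−P, 0, Y U_{0,T}ᵀ, Y X_{1,T}ᵀ, −δ Y V_{0,T}ᵀ], [0, −ε₁P, 0, 0, δε₁P], [U_{0,T} Yᵀ, 0, −ε₁I, 0, 0], [X_{1,T} Yᵀ, 0, 0, −P + ε₂I, 0], [−δ V_{0,T} Yᵀ, δε₁P, 0, 0, −ε₂I]] is negative definite and P = X_{0,T} Yᵀ. Set Q := P⁻¹ and K := U_{0,T} Yᵀ (X_{0,T} Yᵀ)⁻¹ ∈ ℝ^{1×n}, and let f(x) := A x + B (K x) + D x (K x) be the closed-loop map. Then the Lyapunov function V(x) := xᵀ Q x satisfies V(f(x)) − V(x) < 0 for all x ∈ ℰ_Q \ {0}, where ℰ_Q := {x ∈ ℝⁿ : xᵀ Q x ≤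 1}. -/
/-!
The diagonal blocks of the LMI force `P ≻ 0`, `ε₁ > 0` and `ε₂ > 0`. Write `y = P q` and
`u = K y`. The data identity `X₁ = A X₀ + B U₀ + D V₀` together with `P = X₀ Yᵀ` and
`K P = U₀ Yᵀ` gives `(A + B K) P = X₁ Yᵀ - D V₀ Yᵀ`, so the closed loop is `f y = X₁ Yᵀ q + D w`
with `w = u y - V₀ Yᵀ q`. Evaluating the negative definite block matrix at
`(q, s q, s, Q (f y), (δ / ε₂) w)` with `s = u / ε₁` gives
`V (f y) + [ε₂ |Q f y|² - 2 ⟪D w, Q f y⟫ + δ² |w|² / ε₂] < V y - s u (1 - V y)`.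
The bracket is nonnegative by completing the square and `|D w| ≤ δ |w|`, and
`s u = u² / ε₁ ≥ 0`, so `V (f y) < V y` as soon as `V y ≤ 1`.
-/

open Matrix
open scoped Matrix.Norms.L2Operator

theorem two_mul_dotProduct_sub_le_div {ι : Type*} [Fintype ι] {ε : ℝ} (hε : 0 < ε)
    (p g : ι → ℝ) : 2 * (p ⬝ᵥ g) - ε * (g ⬝ᵥ g) ≤ (p ⬝ᵥ p) / ε := by
  have h := dotProduct_self_star_nonneg (p - ε • g)
  simp only [star_trivial, sub_dotProduct, dotProduct_sub, smul_dotProduct, dotProduct_smul,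
    smul_eq_mul, dotProduct_comm g p] at h
  rw [le_div_iff₀ hε]
  nlinarith

namespace Matrix

theorem replicateCol_transpose_mul_mul_replicateCol_apply {R m ι : Type*} [CommSemiring R]
    [Fintype m] (M : Matrix m m R) (v : m → R) (i j : ι) :
    ((replicateCol ι v)ᵀ * M * replicateCol ι v) i j = v ⬝ᵥ M *ᵥ v := by
  rw [transpose_replicateCol, Matrix.mul_assoc, ← replicateCol_mulVec,
    replicateRow_mul_replicateCol_apply]

variable {ι : Type*} [Fintype ι]

theorem mulVec_dotProduct_self_le_of_l2_opNorm_le [DecidableEq ι] {D : Matrix ι ι ℝ} {δ : ℝ}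
    (hD : ‖D‖ ≤ δ) (w : ι → ℝ) : D *ᵥ w ⬝ᵥ D *ᵥ w ≤ δ ^ 2 * (w ⬝ᵥ w) := by
  have hnorm : ‖WithLp.toLp 2 (D *ᵥ w)‖ ≤ δ * ‖WithLp.toLp 2 w‖ :=
    (D.l2_opNorm_mulVec (WithLp.toLp 2 w)).trans (by gcongr)
  have hsq := pow_le_pow_left₀ (norm_nonneg _) hnorm 2
  rw [mul_pow, EuclideanSpace.real_norm_sq_eq, EuclideanSpace.real_norm_sq_eq] at hsq
  simpa [dotProduct, sq] using hsq

theorem two_mul_mulVec_dotProduct_sub_le [DecidableEq ι] {D : Matrix ι ι ℝ} {δ ε : ℝ}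
    (hD : ‖D‖ ≤ δ) (hε : 0 < ε) (w g : ι → ℝ) :
    2 * (D *ᵥ w ⬝ᵥ g) - ε * (g ⬝ᵥ g) ≤ δ ^ 2 / ε * (w ⬝ᵥ w) := by
  refine (two_mul_dotProduct_sub_le_div hε _ _).trans ?_
  rw [div_mul_eq_mul_div]
  gcongr
  exact mulVec_dotProduct_self_le_of_l2_opNorm_le hD w

theorem dotProduct_mulVec_neg_of_posDef_neg {M : Matrix ι ι ℝ} (hM : (-M).PosDef)
    {v : ι → ℝ} (hv : v ≠ 0) : v ⬝ᵥ M *ᵥ v < 0 := by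
  simpa [neg_mulVec] using hM.dotProduct_mulVec_pos hv

end Matrix

section Bilinear

variable {R m τ : Type*} [CommRing R] [Fintype m] [Fintype τ]

theorem stateData_succ_eq {T : ℕ} (A D : Matrix m m R) (B : Matrix m (Fin 1) R)
    (u : ℕ → R) (x : ℕ → Matrix m (Fin 1) R)
    (hdyn : ∀ t < T, x (t + 1) = A * x t + u t • B + u t • (D * x t)) :
    (of fun i (t : Fin T) => x (t + 1) i 0) =
      A * (of fun i (t : Fin T) => x t i 0) + B * (of fun (_ : Fin 1) (t : Fin T) => u t)
        + D * (of fun i (t : Fin T) => x t i 0 * u t) := by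
  ext i t
  simp [mul_apply, hdyn t t.2, Finset.mul_sum, mul_left_comm, mul_comm]

theorem bilinear_replicateCol (A D : Matrix m m R) (B : Matrix m (Fin 1) R)
    (K : Matrix (Fin 1) m R) (v : m → R) :
    let y := replicateCol (Fin 1) v
    A * y + B * (K * y) + D * y * (K * y) =
      replicateCol (Fin 1) (A *ᵥ v + B *ᵥ (K *ᵥ v) + (K *ᵥ v) 0 • D *ᵥ v) := by
  simp only [← replicateCol_mulVec]
  ext i j
  simp only [Matrix.add_apply, replicateCol_apply, Pi.add_apply, Pi.smul_apply, smul_eq_mul,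
    mulVec, dotProduct, Fin.sum_univ_one]
  ring

variable {ι : Type*} [Fintype ι] {A D P : Matrix m m R} {B : Matrix m ι R} {K : Matrix ι m R}
  {X₀ X₁ V₀ Y : Matrix m τ R} {U₀ : Matrix ι τ R}

theorem closedLoop_mul_eq (hdata : X₁ = A * X₀ + B * U₀ + D * V₀) (hP : P = X₀ * Yᵀ)
    (hKP : K * P = U₀ * Yᵀ) : (A + B * K) * P = X₁ * Yᵀ - D * (V₀ * Yᵀ) := by
  rw [hdata, Matrix.add_mul, Matrix.add_mul, Matrix.add_mul, Matrix.mul_assoc B K, hKP,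
    Matrix.mul_assoc A, Matrix.mul_assoc B, Matrix.mul_assoc D, ← hP]
  abel

theorem closedLoop_mulVec_eq (hcl : (A + B * K) * P = X₁ * Yᵀ - D * (V₀ * Yᵀ))
    {q y : m → R} (hq : P *ᵥ q = y) (c : R) :
    A *ᵥ y + B *ᵥ (K *ᵥ y) + c • D *ᵥ y = (X₁ * Yᵀ) *ᵥ q + D *ᵥ (c • y - (V₀ * Yᵀ) *ᵥ q) := by
  have h := congrArg (· *ᵥ q) hcl
  simp only [Matrix.add_mul, add_mulVec, sub_mulVec, ← mulVec_mulVec, hq] at h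
  simp only [mulVec_sub, mulVec_smul, ← mulVec_mulVec, h]
  abel

end Bilinear

section LMI

variable {n T : ℕ} {P : Matrix (Fin n) (Fin n) ℝ} {Y : Matrix (Fin n) (Fin T) ℝ}
  {U₀ : Matrix (Fin 1) (Fin T) ℝ} {X₁ V₀ : Matrix (Fin n) (Fin T) ℝ} {δ ε₁ ε₂ : ℝ}

theorem dataBlockMat5_quadForm (hP : P.IsSymm) (a b d e : Fin n → ℝ) (c : Fin 1 → ℝ) :
    let v := Sum.elim (Sum.elim (Sum.elim a b) (Sum.elim c d)) e
    v ⬝ᵥ dataBlockMat5 P Y U₀ X₁ V₀ δ ε₁ ε₂ *ᵥ v =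
      -(a ⬝ᵥ P *ᵥ a) - ε₁ * (b ⬝ᵥ P *ᵥ b) - ε₁ * (c ⬝ᵥ c) - d ⬝ᵥ P *ᵥ d
        + ε₂ * (d ⬝ᵥ d) - ε₂ * (e ⬝ᵥ e)
        + 2 * (c ⬝ᵥ (U₀ * Yᵀ) *ᵥ a) + 2 * (d ⬝ᵥ (X₁ * Yᵀ) *ᵥ a)
        - 2 * δ * (e ⬝ᵥ (V₀ * Yᵀ) *ᵥ a) + 2 * δ * ε₁ * (e ⬝ᵥ P *ᵥ b) := by
  have hswap : ∀ {k : ℕ} (M : Matrix (Fin k) (Fin n) ℝ) (z : Fin k → ℝ) (w : Fin n → ℝ),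
      w ⬝ᵥ Mᵀ *ᵥ z = z ⬝ᵥ M *ᵥ w := fun M z w => by
    rw [dotProduct_mulVec, vecMul_transpose, dotProduct_comm]
  simp only [dataBlockMat5, fromBlocks_mulVec, fromRows_mulVec, fromCols_mulVec_sumElim,
    Sum.elim_comp_inl, Sum.elim_comp_inr, ← Sum.elim_add_add, sumElim_dotProduct_sumElim,
    add_mulVec, neg_mulVec, smul_mulVec, one_mulVec, zero_mulVec, zero_add, add_zero,
    dotProduct_add, dotProduct_neg, dotProduct_smul, smul_eq_mul]
  have h₁ := hswap (Y * U₀ᵀ)ᵀ c a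
  have h₂ := hswap (Y * X₁ᵀ)ᵀ d a
  have h₃ := hswap (Y * V₀ᵀ)ᵀ e a
  have h₄ := hswap P b e
  simp only [transpose_transpose, transpose_mul, hP.eq] at h₁ h₂ h₃ h₄
  rw [h₁, h₂, h₃, h₄]
  ring

theorem posDef_of_dataBlockMat5 (hP : P.IsSymm)
    (hblock : (-dataBlockMat5 P Y U₀ X₁ V₀ δ ε₁ ε₂).PosDef) : P.PosDef := by
  refine .of_dotProduct_mulVec_pos (isHermitian_iff_isSymm.mpr hP) fun a ha => ?_
  have h := dotProduct_mulVec_neg_of_posDef_neg hblock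
    (v := Sum.elim (Sum.elim (Sum.elim a 0) (Sum.elim 0 0)) 0)
    (fun h0 => ha (funext fun i => congrFun h0 (.inl (.inl (.inl i)))))
  rw [dataBlockMat5_quadForm hP] at h
  simp only [star_trivial, zero_dotProduct, dotProduct_zero, mulVec_zero] at h ⊢
  linarith

theorem ε₁_pos_of_dataBlockMat5 (hP : P.IsSymm)
    (hblock : (-dataBlockMat5 P Y U₀ X₁ V₀ δ ε₁ ε₂).PosDef) : 0 < ε₁ := by
  have h := dotProduct_mulVec_neg_of_posDef_neg hblock
    (v := Sum.elim (Sum.elim (Sum.elim 0 0) (Sum.elim 1 0)) 0)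
    (fun h0 => one_ne_zero (congrFun h0 (.inl (.inr (.inl 0)))))
  rw [dataBlockMat5_quadForm hP] at h
  simp [dotProduct] at h
  linarith

theorem ε₂_pos_of_dataBlockMat5 (hP : P.IsSymm)
    (hblock : (-dataBlockMat5 P Y U₀ X₁ V₀ δ ε₁ ε₂).PosDef) {e : Fin n → ℝ} (he : e ≠ 0) :
    0 < ε₂ := by
  have h := dotProduct_mulVec_neg_of_posDef_neg hblock
    (v := Sum.elim (Sum.elim (Sum.elim 0 0) (Sum.elim 0 0)) e)
    (fun h0 => he (funext fun i => congrFun h0 (.inr i)))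
  rw [dataBlockMat5_quadForm hP] at h
  simp only [dotProduct_zero, mulVec_zero, mul_zero] at h
  have he' : 0 < e ⬝ᵥ e := by simpa using dotProduct_self_star_pos_iff.mpr he
  nlinarith

theorem dataBlockMat5_testVector_lt {Q : Matrix (Fin n) (Fin n) ℝ} {K : Matrix (Fin 1) (Fin n) ℝ}
    (hP : P.IsSymm) (hblock : (-dataBlockMat5 P Y U₀ X₁ V₀ δ ε₁ ε₂).PosDef) (hPQ : P * Q = 1)
    (hKP : K * P = U₀ * Yᵀ) {y : Fin n → ℝ} (hy0 : y ≠ 0) (g e : Fin n → ℝ) :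
    let q := Q *ᵥ y
    let u := (K *ᵥ y) 0
    2 * (g ⬝ᵥ (X₁ * Yᵀ) *ᵥ q) - g ⬝ᵥ P *ᵥ g + ε₂ * (g ⬝ᵥ g)
        + 2 * δ * (e ⬝ᵥ (u • y - (V₀ * Yᵀ) *ᵥ q)) - ε₂ * (e ⬝ᵥ e)
      < y ⬝ᵥ q - u / ε₁ * u * (1 - y ⬝ᵥ q) := by
  intro q u
  have hPq : P *ᵥ q = y := by rw [mulVec_mulVec, hPQ, one_mulVec]
  have hUq : (U₀ * Yᵀ) *ᵥ q = K *ᵥ y := by rw [← hKP, ← mulVec_mulVec, hPq]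
  have hq0 : q ≠ 0 := fun h0 => hy0 (by rw [← hPq, h0, mulVec_zero])
  have hs : ε₁ * (u / ε₁) = u := mul_div_cancel₀ u (ε₁_pos_of_dataBlockMat5 hP hblock).ne'
  set s := u / ε₁
  clear_value s
  have h := dotProduct_mulVec_neg_of_posDef_neg hblock
    (v := Sum.elim (Sum.elim (Sum.elim q (s • q)) (Sum.elim (fun _ => s) g)) e)
    (fun h0 => hq0 (funext fun i => congrFun h0 (.inl (.inl (.inl i)))))
  have hconst : ∀ (a : ℝ) (v : Fin 1 → ℝ), (fun _ => a) ⬝ᵥ v = a * v 0 := by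
    simp [dotProduct]
  rw [dataBlockMat5_quadForm hP] at h
  simp only [mulVec_smul, dotProduct_smul, smul_dotProduct, hPq, hUq, smul_eq_mul, hconst,
    dotProduct_comm q y] at h
  rw [dotProduct_sub, dotProduct_smul, smul_eq_mul]
  linear_combination h + (s * (y ⬝ᵥ q) + s - 2 * δ * (e ⬝ᵥ y)) * hs

theorem lyapunov_decrease_of_dataBlockMat5 {A D Q : Matrix (Fin n) (Fin n) ℝ}
    {B : Matrix (Fin n) (Fin 1) ℝ} {K : Matrix (Fin 1) (Fin n) ℝ}
    (hP : P.IsSymm) (hblock : (-dataBlockMat5 P Y U₀ X₁ V₀ δ ε₁ ε₂).PosDef) (hPQ : P * Q = 1)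
    (hKP : K * P = U₀ * Yᵀ) (hcl : (A + B * K) * P = X₁ * Yᵀ - D * (V₀ * Yᵀ)) (hD : ‖D‖ ≤ δ)
    {y : Fin n → ℝ} (hy0 : y ≠ 0) (hy : y ⬝ᵥ Q *ᵥ y ≤ 1) :
    let f := A *ᵥ y + B *ᵥ (K *ᵥ y) + (K *ᵥ y) 0 • D *ᵥ y
    f ⬝ᵥ Q *ᵥ f < y ⬝ᵥ Q *ᵥ y := by
  intro f
  set q := Q *ᵥ y
  set u := (K *ᵥ y) 0
  set w := u • y - (V₀ * Yᵀ) *ᵥ q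
  set g := Q *ᵥ f
  have hε₁ : 0 < ε₁ := ε₁_pos_of_dataBlockMat5 hP hblock
  have hε₂ : 0 < ε₂ := ε₂_pos_of_dataBlockMat5 hP hblock hy0
  have hPg : P *ᵥ g = f := by rw [mulVec_mulVec, hPQ, one_mulVec]
  have hf : f = (X₁ * Yᵀ) *ᵥ q + D *ᵥ w :=
    closedLoop_mulVec_eq hcl (by rw [mulVec_mulVec, hPQ, one_mulVec]) u
  have hXq : g ⬝ᵥ (X₁ * Yᵀ) *ᵥ q = f ⬝ᵥ g - D *ᵥ w ⬝ᵥ g := by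
    rw [hf, add_dotProduct, dotProduct_comm g]; ring
  have h := dataBlockMat5_testVector_lt hP hblock hPQ hKP hy0 g ((δ / ε₂) • w)
  simp only [hPg, dotProduct_smul, smul_dotProduct, smul_eq_mul, dotProduct_comm g f] at h
  have hDw := two_mul_mulVec_dotProduct_sub_le hD hε₂ w g
  have hsu : 0 ≤ u / ε₁ * u * (1 - y ⬝ᵥ q) :=
    mul_nonneg (by rw [div_mul_eq_mul_div]; exact div_nonneg (mul_self_nonneg u) hε₁.le)
      (sub_nonneg.2 hy)
  have hrobust : 2 * δ * (δ / ε₂ * (w ⬝ᵥ w)) - ε₂ * (δ / ε₂ * (δ / ε₂ * (w ⬝ᵥ w)))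
      = δ ^ 2 / ε₂ * (w ⬝ᵥ w) := by
    field_simp
    ring
  linarith

end LMI

theorem data_based_lyapunov_decrease_general {n T : ℕ}
    (A : Matrix (Fin n) (Fin n) ℝ) (B : Matrix (Fin n) (Fin 1) ℝ)
    (D : Matrix (Fin n) (Fin n) ℝ)
    (δ : ℝ) (hD : ‖D‖ ≤ δ)
    (u : ℕ → ℝ) (x : ℕ → Matrix (Fin n) (Fin 1) ℝ)
    (hdyn : ∀ t < T, x (t + 1) = A * x t + u t • B + u t • (D * x t))
    (U₀ : Matrix (Fin 1) (Fin T) ℝ)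
    (hU₀ : U₀ = Matrix.of fun (_ : Fin 1) (t : Fin T) => u t)
    (X₀ : Matrix (Fin n) (Fin T) ℝ)
    (hX₀ : X₀ = Matrix.of fun (i : Fin n) (t : Fin T) => x t i 0)
    (X₁ : Matrix (Fin n) (Fin T) ℝ)
    (hX₁ : X₁ = Matrix.of fun (i : Fin n) (t : Fin T) => x (t + 1) i 0)
    (V₀ : Matrix (Fin n) (Fin T) ℝ)
    (hV₀ : V₀ = Matrix.of fun (i : Fin n) (t : Fin T) => x t i 0 * u t)
    (ε₁ ε₂ : ℝ) (Y : Matrix (Fin n) (Fin T) ℝ)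
    (P : Matrix (Fin n) (Fin n) ℝ) (hPsym : P = Pᵀ)
    (hblock : (-(dataBlockMat5 P Y U₀ X₁ V₀ δ ε₁ ε₂)).PosDef)
    (hP : P = X₀ * Yᵀ)
    (Q : Matrix (Fin n) (Fin n) ℝ) (hQ : Q = P⁻¹)
    (K : Matrix (Fin 1) (Fin n) ℝ) (hK : K = U₀ * Yᵀ * (X₀ * Yᵀ)⁻¹)
    (f : Matrix (Fin n) (Fin 1) ℝ → Matrix (Fin n) (Fin 1) ℝ)
    (hf : ∀ y : Matrix (Fin n) (Fin 1) ℝ, f y = A * y + B * (K * y) + D * y * (K * y))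
    (V : Matrix (Fin n) (Fin 1) ℝ → ℝ)
    (hV : ∀ y : Matrix (Fin n) (Fin 1) ℝ, V y = (yᵀ * Q * y) 0 0) :
    ∀ y : Matrix (Fin n) (Fin 1) ℝ, (yᵀ * Q * y) 0 0 ≤ 1 → y ≠ 0 →
      V (f y) - V y < 0 := by
  have hPsymm : P.IsSymm := hPsym.symm
  have hunit : IsUnit P.det := (posDef_of_dataBlockMat5 hPsymm hblock).det_pos.ne'.isUnit
  have hPQ : P * Q = 1 := hQ ▸ mul_nonsing_inv P hunit
  have hKP : K * P = U₀ * Yᵀ := by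
    rw [hK, ← hP, Matrix.mul_assoc, nonsing_inv_mul P hunit, Matrix.mul_one]
  have hdata : X₁ = A * X₀ + B * U₀ + D * V₀ := by
    rw [hX₁, hX₀, hU₀, hV₀]; exact stateData_succ_eq A D B u x hdyn
  intro y hy hy0
  obtain ⟨v, rfl⟩ : ∃ v, y = replicateCol (Fin 1) v :=
    ⟨fun i => y i 0, by ext i j; fin_cases j; rfl⟩
  rw [replicateCol_transpose_mul_mul_replicateCol_apply] at hy
  rw [hV, hV, hf, bilinear_replicateCol, replicateCol_transpose_mul_mul_replicateCol_apply,
    replicateCol_transpose_mul_mul_replicateCol_apply, sub_neg]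
  exact lyapunov_decrease_of_dataBlockMat5 hPsymm hblock hPQ hKP
    (closedLoop_mul_eq hdata hP hKP) hD (fun h0 => hy0 (by rw [h0, replicateCol_zero])) hy

/-- Proposition 1, part (i): the data-based LMI yields a Lyapunov function that
strictly decreases along the closed loop on the ellipsoid `ℰ_Q \ {0}`. -/
theorem data_based_lyapunov_decrease {n T : ℕ} (hn : 0 < n) (hT : 0 < T)
    (A : Matrix (Fin n) (Fin n) ℝ) (B : Matrix (Fin n) (Fin 1) ℝ)
    (D : Matrix (Fin n) (Fin n) ℝ)
    (δ : ℝ) (hδ : 0 < δ) (hD : ‖D‖ ≤ δ)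
    (u : ℕ → ℝ) (x : ℕ → Matrix (Fin n) (Fin 1) ℝ)
    (hdyn : ∀ t < T, x (t + 1) = A * x t + u t • B + u t • (D * x t))
    (U₀ : Matrix (Fin 1) (Fin T) ℝ)
    (hU₀ : U₀ = Matrix.of fun (_ : Fin 1) (t : Fin T) => u t)
    (X₀ : Matrix (Fin n) (Fin T) ℝ)
    (hX₀ : X₀ = Matrix.of fun (i : Fin n) (t : Fin T) => x t i 0)
    (X₁ : Matrix (Fin n) (Fin T) ℝ)
    (hX₁ : X₁ = Matrix.of fun (i : Fin n) (t : Fin T) => x (t + 1) i 0)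
    (V₀ : Matrix (Fin n) (Fin T) ℝ)
    (hV₀ : V₀ = Matrix.of fun (i : Fin n) (t : Fin T) => x t i 0 * u t)
    (ε₁ ε₂ : ℝ) (Y : Matrix (Fin n) (Fin T) ℝ)
    (P : Matrix (Fin n) (Fin n) ℝ) (hPsym : P = Pᵀ)
    (hblock : (-(dataBlockMat5 P Y U₀ X₁ V₀ δ ε₁ ε₂)).PosDef)
    (hP : P = X₀ * Yᵀ)
    (Q : Matrix (Fin n) (Fin n) ℝ) (hQ : Q = P⁻¹)
    (K : Matrix (Fin 1) (Fin n) ℝ) (hK : K = U₀ * Yᵀ * (X₀ * Yᵀ)⁻¹)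
    (f : Matrix (Fin n) (Fin 1) ℝ → Matrix (Fin n) (Fin 1) ℝ)
    (hf : ∀ y : Matrix (Fin n) (Fin 1) ℝ, f y = A * y + B * (K * y) + D * y * (K * y))
    (V : Matrix (Fin n) (Fin 1) ℝ → ℝ)
    (hV : ∀ y : Matrix (Fin n) (Fin 1) ℝ, V y = (yᵀ * Q * y) 0 0) :
    ∀ y : Matrix (Fin n) (Fin 1) ℝ, (yᵀ * Q * y) 0 0 ≤ 1 → y ≠ 0 →
      V (f y) - V y < 0 :=
  data_based_lyapunov_decrease_general A B D δ hD u x hdyn U₀ hU₀ X₀ hX₀ X₁ hX₁ V₀ hV₀ ε₁ ε₂ Y P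
    hPsym hblock hP Q hQ K hK f hf V hV
end

section
/- (Proposition 1, part (ii).) Suppose ‖D‖ ≤ δ for a known δ > 0, and suppose there exist ε₁ ∈ ℝ, ε₂ ∈ ℝ, Y ∈ ℝ^{n×T}, and P = Pᵀ ∈ ℝ^{n×n} such that the block matrix [[−P, 0, Y U_{0,T}ᵀ, Y X_{1,T}ᵀ, −δ Y V_{0,T}ᵀ], [0, −ε₁P, 0, 0, δε₁P], [U_{0,T} Yᵀ, 0, −ε₁I, 0, 0], [X_{1,T} Yᵀ, 0, 0, −P + ε₂I, 0], [−δ V_{0,T} Yᵀ, δε₁P, 0, 0, −ε₂I]] is negative definite and P = X_{0,T} Yᵀ. Set Q := P⁻¹, K := U_{0,T} Yᵀ (X_{0,T} Yᵀ)⁻¹, f(x) := A x + B (K x) + D x (K x), and ℰ_Q := {x ∈ ℝⁿ : xᵀ Q x ≤ 1}. Then the origin is asymptotically stable for the closed-loop system x(t+1) = f(x(t)) and its basin of attraction contains ℰ_Q; that is: (a) for every ε > 0 there exists η > 0 such that every solution with ‖x(0)‖ < η satisfies ‖x(t)‖ < ε for all t ≥ 0; (b) every solution with x(0) ∈ ℰ_Q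 satisfies x(t) ∈ ℰ_Q for all t ≥ 0 and x(t) → 0 as t → ∞. -/
open Matrix Filter
open scoped Matrix.Norms.L2Operator Topology

/-
With `V x = xᵀ Q x`, `ξ = Q x`, `w = K x` and `d = Q x⁺`, the data identity
`X₁ = A X₀ + B U₀ + D V₀` turns `X₁ Yᵀ` into `(A + B K) P + D V₀ Yᵀ`, and evaluating the negative
definite block form at `(ξ, (w/ε₁) ξ, w/ε₁, d, δ⁻¹ Dᵀ d)` gives
`V x⁺ - V x + (w²/ε₁) (1 - V x) + ε₂ (|d|² - |Dᵀ d|²/δ²) < 0`.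
On `ℰ_Q` the last two terms are nonnegative (the second because `‖Dᵀ‖ = ‖D‖ ≤ δ`), so `V` strictly
decreases along the closed loop on `ℰ_Q \ {0}`. Since `V ≥ c ‖x‖²`, the sublevel set `ℰ_Q` is
compact and invariant, which gives stability, and a uniform decrease on the compact sets
`{ℓ ≤ V ≤ 1}` forces `V → 0`, hence `x → 0`.
-/

section Lyapunov

variable {X : Type*} {f : X → X} {V : X → ℝ} {z : ℕ → X} {r : ℝ}

theorem antitone_comp_of_forall_le (hz : ∀ t, z (t + 1) = f (z t))
    (hle : ∀ y, V y ≤ r → V (f y) ≤ V y) (h0 : V (z 0) ≤ r) : Antitone (V ∘ z) := by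
  have hr : ∀ t, V (z t) ≤ r := by
    intro t
    induction t with
    | zero => exact h0
    | succ t ih => rw [hz]; exact (hle _ ih).trans ih
  exact antitone_nat_of_succ_le fun t => by simpa only [Function.comp, hz] using hle _ (hr t)

theorem tendsto_comp_zero_of_lt [TopologicalSpace X] (hf : Continuous f) (hV : Continuous V)
    (hK : IsCompact {y | V y ≤ r}) (hV_nonneg : ∀ y, 0 ≤ V y)
    (hlt : ∀ y, V y ≤ r → 0 < V y → V (f y) < V y)
    (hz : ∀ t, z (t + 1) = f (z t)) (hanti : Antitone (V ∘ z)) (h0 : V (z 0) ≤ r) :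
    Tendsto (V ∘ z) atTop (𝓝 0) := by
  have hbdd : BddBelow (Set.range (V ∘ z)) := ⟨0, by rintro _ ⟨t, rfl⟩; exact hV_nonneg _⟩
  have htend := tendsto_atTop_ciInf hanti hbdd
  set ℓ := ⨅ t, (V ∘ z) t
  have hℓ : ∀ t, ℓ ≤ V (z t) := ciInf_le hbdd
  rcases (le_ciInf fun t => hV_nonneg (z t) : 0 ≤ ℓ).eq_or_lt with hℓ0 | hℓpos
  · rwa [hℓ0]
  -- On the compact set `{ℓ ≤ V ≤ r}` the decrease `V - V ∘ f` is bounded below by some `μ > 0`,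
  -- which would push `V (z t)` below its infimum `ℓ`.
  obtain ⟨μ, hμ, hgap⟩ : ∃ μ, 0 < μ ∧ ∀ y ∈ {y | V y ≤ r} ∩ {y | ℓ ≤ V y}, μ ≤ V y - V (f y) :=
    (hK.inter_right (isClosed_le continuous_const hV)).exists_forall_le'
      (hV.sub (hV.comp hf)).continuousOn
      fun y ⟨hyr, hyℓ⟩ => sub_pos.2 (hlt y hyr (hℓpos.trans_le hyℓ))
  have hstep : ∀ t, V (z (t + 1)) ≤ V (z t) - μ := fun t => by
    rw [hz]
    linarith [hgap (z t) ⟨(hanti (Nat.zero_le t)).trans h0, hℓ t⟩]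
  have := le_of_tendsto_of_tendsto' (htend.comp (tendsto_add_atTop_nat 1)) (htend.sub_const μ)
    hstep
  linarith

end Lyapunov

section Coercive

variable {E : Type*} [NormedAddCommGroup E] {V : E → ℝ} {c : ℝ}

theorem norm_lt_of_lt_mul_sq (hc : 0 < c) (hcV : ∀ y, c * ‖y‖ ^ 2 ≤ V y) {y : E} {ε : ℝ}
    (hε : 0 ≤ ε) (hy : V y < c * ε ^ 2) : ‖y‖ < ε :=
  (pow_lt_pow_iff_left₀ (norm_nonneg y) hε two_ne_zero).1 <|
    (mul_lt_mul_iff_right₀ hc).1 ((hcV y).trans_lt hy)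

theorem isCompact_sublevel_of_mul_sq_le [ProperSpace E] (hV : Continuous V) (hc : 0 < c)
    (hcV : ∀ y, c * ‖y‖ ^ 2 ≤ V y) (r : ℝ) : IsCompact {y | V y ≤ r} := by
  refine Metric.isCompact_of_isClosed_isBounded (isClosed_le hV continuous_const)
    ((Metric.isBounded_closedBall (x := 0) (r := √(r / c))).subset fun y hy => ?_)
  rw [mem_closedBall_zero_iff, ← abs_norm]
  exact Real.abs_le_sqrt ((le_div_iff₀' hc).2 ((hcV y).trans hy))

theorem exists_pos_mul_sq_le_of_homogeneous [NormedSpace ℝ E] [ProperSpace E]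
    (hV : Continuous V) (hpos : ∀ y ≠ 0, 0 < V y) (hsmul : ∀ (t : ℝ) y, V (t • y) = t ^ 2 * V y) :
    ∃ c > 0, ∀ y, c * ‖y‖ ^ 2 ≤ V y := by
  obtain ⟨c, hc, hcV⟩ := (isCompact_sphere (0 : E) 1).exists_forall_le' hV.continuousOn
    fun y hy => hpos y (ne_zero_of_mem_unit_sphere ⟨y, hy⟩)
  refine ⟨c, hc, fun y => ?_⟩
  rcases eq_or_ne y 0 with rfl | hy
  · simp [(by simpa using hsmul 0 0 : V 0 = 0)]
  have hy' : 0 < ‖y‖ := norm_pos_iff.2 hy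
  calc c * ‖y‖ ^ 2 ≤ V (‖y‖⁻¹ • y) * ‖y‖ ^ 2 := by
        gcongr
        exact hcV _ (by simp [norm_smul, hy'.ne'])
    _ = V y := by rw [hsmul]; field_simp

theorem stable_and_attractive_of_lyapunov [ProperSpace E] {f : E → E} (hf : Continuous f)
    (hV : Continuous V) (hc : 0 < c) (hcV : ∀ y, c * ‖y‖ ^ 2 ≤ V y) (hV0 : V 0 = 0)
    (hf0 : f 0 = 0) (hdec : ∀ y, V y ≤ 1 → y ≠ 0 → V (f y) < V y) :
    (∀ ε > (0 : ℝ), ∃ η > (0 : ℝ), ∀ z : ℕ → E, (∀ t, z (t + 1) = f (z t)) →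
        ‖z 0‖ < η → ∀ t, ‖z t‖ < ε) ∧
    (∀ z : ℕ → E, (∀ t, z (t + 1) = f (z t)) →
        V (z 0) ≤ 1 → (∀ t, V (z t) ≤ 1) ∧ Tendsto z atTop (𝓝 0)) := by
  have hle : ∀ y, V y ≤ 1 → V (f y) ≤ V y := fun y hy => by
    rcases eq_or_ne y 0 with rfl | hy0
    · rw [hf0]
    · exact (hdec y hy hy0).le
  constructor
  · intro ε hε
    obtain ⟨η, hη, hηV⟩ := Metric.continuousAt_iff.1 hV.continuousAt (min 1 (c * ε ^ 2))
      (by positivity)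
    refine ⟨η, hη, fun z hz hz0 t => norm_lt_of_lt_mul_sq hc hcV hε.le ?_⟩
    have hz0V : V (z 0) < min 1 (c * ε ^ 2) := by
      have := hηV (by rwa [dist_zero_right])
      rw [Real.dist_eq, hV0, sub_zero] at this
      exact (le_abs_self _).trans_lt this
    have := antitone_comp_of_forall_le hz hle (hz0V.le.trans (min_le_left _ _)) (Nat.zero_le t)
    exact (this.trans_lt hz0V).trans_le (min_le_right _ _)
  · intro z hz h0
    have hanti := antitone_comp_of_forall_le hz hle h0
    refine ⟨fun t => (hanti (Nat.zero_le t)).trans h0, ?_⟩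
    have hVz := tendsto_comp_zero_of_lt hf hV (isCompact_sublevel_of_mul_sq_le hV hc hcV 1)
      (fun y => (by positivity : 0 ≤ c * ‖y‖ ^ 2).trans (hcV y))
      (fun y hy hy0 => hdec y hy (by rintro rfl; simp [hV0] at hy0)) hz hanti h0
    rw [Metric.tendsto_nhds]
    intro ε hε
    filter_upwards [(tendsto_order.1 hVz).2 (c * ε ^ 2) (by positivity)] with t ht
    simpa using norm_lt_of_lt_mul_sq hc hcV hε.le ht

end Coercive

theorem Matrix.transpose_mul_mul_col {m : Type*} [Fintype m] (Q : Matrix m m ℝ)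
    (y : Matrix m (Fin 1) ℝ) :
    (yᵀ * Q * y) 0 0 = (fun i => y i 0) ⬝ᵥ Q *ᵥ fun i => y i 0 := by
  rw [Matrix.mul_assoc]; rfl

theorem Matrix.col_ne_zero {m : Type*} {y : Matrix m (Fin 1) ℝ} (hy : y ≠ 0) :
    (fun i => y i 0) ≠ 0 :=
  fun h => hy (by ext i j; rw [Fin.fin_one_eq_zero j]; exact congrFun h i)

theorem Matrix.PosDef.exists_pos_mul_sq_le {m : Type*} [Fintype m] {Q : Matrix m m ℝ}
    (hQ : Q.PosDef) :
    ∃ c > 0, ∀ y : Matrix m (Fin 1) ℝ, c * ‖y‖ ^ 2 ≤ (yᵀ * Q * y) 0 0 := by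
  refine exists_pos_mul_sq_le_of_homogeneous (by fun_prop) (fun y hy => ?_) fun t y => ?_
  · simpa [transpose_mul_mul_col] using hQ.dotProduct_mulVec_pos (col_ne_zero hy)
  · simp [Matrix.transpose_smul, Matrix.smul_mul, Matrix.mul_smul]; ring

theorem dotProduct_self_eq_norm_sq {ι : Type*} [Fintype ι] (w : ι → ℝ) :
    w ⬝ᵥ w = ‖(EuclideanSpace.equiv ι ℝ).symm w‖ ^ 2 := by
  rw [EuclideanSpace.real_norm_sq_eq]; simp [dotProduct, sq]

theorem Matrix.mulVec_dotProduct_mulVec_self_le {m k : Type*} [Fintype m] [Fintype k]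
    [DecidableEq k] {M : Matrix m k ℝ} {δ : ℝ} (hM : ‖M‖ ≤ δ) (v : k → ℝ) :
    (M *ᵥ v) ⬝ᵥ (M *ᵥ v) ≤ δ ^ 2 * (v ⬝ᵥ v) := by
  rw [dotProduct_self_eq_norm_sq, dotProduct_self_eq_norm_sq, ← mul_pow]
  exact pow_le_pow_left₀ (norm_nonneg _)
    ((M.l2_opNorm_mulVec _).trans (mul_le_mul_of_nonneg_right hM (norm_nonneg _))) 2

section DataBlock

variable {n T : ℕ} {P : Matrix (Fin n) (Fin n) ℝ} {Y : Matrix (Fin n) (Fin T) ℝ}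
  {U₀ : Matrix (Fin 1) (Fin T) ℝ} {X₁ V₀ : Matrix (Fin n) (Fin T) ℝ} {δ ε₁ ε₂ : ℝ}

theorem dotProduct_dataBlockMat5_mulVec (hP : Pᵀ = P) (a b : Fin n → ℝ) (c : Fin 1 → ℝ)
    (d e : Fin n → ℝ) :
    let v := Sum.elim (Sum.elim (Sum.elim a b) (Sum.elim c d)) e
    v ⬝ᵥ dataBlockMat5 P Y U₀ X₁ V₀ δ ε₁ ε₂ *ᵥ v
      = -(a ⬝ᵥ P *ᵥ a) - ε₁ * (b ⬝ᵥ P *ᵥ b) - ε₁ * (c ⬝ᵥ c) - d ⬝ᵥ P *ᵥ d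
        + ε₂ * (d ⬝ᵥ d) - ε₂ * (e ⬝ᵥ e) + 2 * (c ⬝ᵥ (U₀ * Yᵀ) *ᵥ a)
        + 2 * (d ⬝ᵥ (X₁ * Yᵀ) *ᵥ a) - 2 * δ * (e ⬝ᵥ (V₀ * Yᵀ) *ᵥ a)
        + 2 * δ * ε₁ * (e ⬝ᵥ P *ᵥ b) := by
  have hswap : ∀ {m : ℕ} (M : Matrix (Fin n) (Fin m) ℝ) (u : Fin m → ℝ) (w : Fin n → ℝ),
      w ⬝ᵥ M *ᵥ u = u ⬝ᵥ Mᵀ *ᵥ w := fun M u w => by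
    rw [dotProduct_mulVec, mulVec_transpose, dotProduct_comm]
  simp only [dataBlockMat5, fromBlocks_mulVec, dotProduct_block, Sum.elim_comp_inl,
    Sum.elim_comp_inr, fromRows_mulVec, fromCols_mulVec_sumElim, add_mulVec, neg_mulVec,
    smul_mulVec, zero_mulVec, one_mulVec, dotProduct_add, dotProduct_neg, dotProduct_smul,
    smul_eq_mul, add_zero, zero_add, dotProduct_zero]
  rw [hswap (Y * U₀ᵀ), hswap (Y * X₁ᵀ), hswap (Y * V₀ᵀ), hswap P e b]
  simp only [transpose_mul, transpose_transpose, hP]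
  ring

theorem posDef_of_posDef_neg_dataBlockMat5
    (hS : (-dataBlockMat5 P Y U₀ X₁ V₀ δ ε₁ ε₂).PosDef) : P.PosDef := by
  have hinj : Function.Injective
      (fun i : Fin n =>
        (Sum.inl (Sum.inl (Sum.inl i)) : ((Fin n ⊕ Fin n) ⊕ (Fin 1 ⊕ Fin n)) ⊕ Fin n)) :=
    fun i j h => by simpa using h
  convert hS.submatrix hinj
  ext i j
  simp [dataBlockMat5]

theorem eps₁_pos_of_posDef_neg_dataBlockMat5
    (hS : (-dataBlockMat5 P Y U₀ X₁ V₀ δ ε₁ ε₂).PosDef) : 0 < ε₁ := by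
  simpa [dataBlockMat5] using hS.diag_pos (i := Sum.inl (Sum.inr (Sum.inl 0)))

theorem eps₂_pos_of_posDef_neg_dataBlockMat5
    (hS : (-dataBlockMat5 P Y U₀ X₁ V₀ δ ε₁ ε₂).PosDef) (i : Fin n) : 0 < ε₂ := by
  simpa [dataBlockMat5] using hS.diag_pos (i := Sum.inr i)

end DataBlock

def closedLoop {n : ℕ} (A D : Matrix (Fin n) (Fin n) ℝ) (B : Matrix (Fin n) (Fin 1) ℝ)
    (K : Matrix (Fin 1) (Fin n) ℝ) (y : Fin n → ℝ) : Fin n → ℝ :=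
  A *ᵥ y + B *ᵥ (K *ᵥ y) + (K *ᵥ y) 0 • D *ᵥ y

theorem closedLoop_dataBlockMat5_ineq {n T : ℕ} {P A D Q : Matrix (Fin n) (Fin n) ℝ}
    {B : Matrix (Fin n) (Fin 1) ℝ} {K : Matrix (Fin 1) (Fin n) ℝ} {Y : Matrix (Fin n) (Fin T) ℝ}
    {U₀ : Matrix (Fin 1) (Fin T) ℝ} {X₁ V₀ : Matrix (Fin n) (Fin T) ℝ} {δ ε₁ ε₂ : ℝ}
    (hS : (-dataBlockMat5 P Y U₀ X₁ V₀ δ ε₁ ε₂).PosDef) (hδ : 0 < δ) (hPQ : P * Q = 1)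
    (hKP : U₀ * Yᵀ = K * P) (hX₁ : X₁ * Yᵀ = A * P + B * (K * P) + D * (V₀ * Yᵀ))
    {y : Fin n → ℝ} (hy : y ≠ 0) :
    let x' := closedLoop A D B K y
    let d := Q *ᵥ x'
    ε₁ * δ ^ 2 * (x' ⬝ᵥ Q *ᵥ x' - y ⬝ᵥ Q *ᵥ y) + δ ^ 2 * (K *ᵥ y) 0 ^ 2 * (1 - y ⬝ᵥ Q *ᵥ y)
      + ε₁ * ε₂ * (δ ^ 2 * (d ⬝ᵥ d) - (Dᵀ *ᵥ d) ⬝ᵥ (Dᵀ *ᵥ d)) < 0 := by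
  intro x' d
  have hε₁ := eps₁_pos_of_posDef_neg_dataBlockMat5 hS
  have hPsym : Pᵀ = P := (posDef_of_posDef_neg_dataBlockMat5 hS).isHermitian
  set w := (K *ᵥ y) 0
  set ξ := Q *ᵥ y
  have hPξ : P *ᵥ ξ = y := by rw [mulVec_mulVec, hPQ, one_mulVec]
  have hPd : P *ᵥ d = x' := by rw [mulVec_mulVec, hPQ, one_mulVec]
  have hξ : ξ ≠ 0 := fun h => hy (by rw [← hPξ, h, mulVec_zero])
  have hU : (U₀ * Yᵀ) *ᵥ ξ = K *ᵥ y := by rw [hKP, ← mulVec_mulVec, hPξ]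
  have hX : (X₁ * Yᵀ) *ᵥ ξ = x' - w • D *ᵥ y + D *ᵥ (V₀ * Yᵀ) *ᵥ ξ := by
    rw [hX₁]
    simp only [x', closedLoop, add_mulVec, ← mulVec_mulVec, hPξ]
    abel
  have hDt : ∀ v, (Dᵀ *ᵥ d) ⬝ᵥ v = d ⬝ᵥ D *ᵥ v := fun v => by
    rw [mulVec_transpose, dotProduct_mulVec]
  have hc : (fun _ : Fin 1 => w / ε₁) ⬝ᵥ (fun _ => w / ε₁) = (w / ε₁) ^ 2 := by
    simp [dotProduct, sq]
  have hcK : (fun _ : Fin 1 => w / ε₁) ⬝ᵥ K *ᵥ y = w / ε₁ * w := by simp [dotProduct, w]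
  -- The S-procedure multipliers `(w/ε₁) ξ`, `w/ε₁` and `δ⁻¹ Dᵀ d` make every cross term cancel.
  have hform := hS.dotProduct_mulVec_pos (x := Sum.elim (Sum.elim (Sum.elim ξ ((w / ε₁) • ξ))
      (Sum.elim (fun _ => w / ε₁) d)) (δ⁻¹ • Dᵀ *ᵥ d))
    fun h => hξ (funext fun i => congrFun h (Sum.inl (Sum.inl (Sum.inl i))))
  rw [star_trivial, neg_mulVec, dotProduct_neg, neg_pos, dotProduct_dataBlockMat5_mulVec hPsym,
    hU, hX] at hform
  simp only [mulVec_smul, hPξ, hPd, dotProduct_smul, smul_dotProduct, dotProduct_add,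
    dotProduct_sub, hDt, smul_eq_mul, hc, hcK] at hform
  rw [hDt, dotProduct_comm x', dotProduct_comm y]
  field_simp at hform
  linear_combination hform

theorem closedLoop_quadForm_lt {n T : ℕ} {P A D Q : Matrix (Fin n) (Fin n) ℝ}
    {B : Matrix (Fin n) (Fin 1) ℝ} {K : Matrix (Fin 1) (Fin n) ℝ} {Y : Matrix (Fin n) (Fin T) ℝ}
    {U₀ : Matrix (Fin 1) (Fin T) ℝ} {X₁ V₀ : Matrix (Fin n) (Fin T) ℝ} {δ ε₁ ε₂ : ℝ}
    (hS : (-dataBlockMat5 P Y U₀ X₁ V₀ δ ε₁ ε₂).PosDef) (hδ : 0 < δ) (hD : ‖D‖ ≤ δ)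
    (hPQ : P * Q = 1) (hKP : U₀ * Yᵀ = K * P)
    (hX₁ : X₁ * Yᵀ = A * P + B * (K * P) + D * (V₀ * Yᵀ))
    {y : Fin n → ℝ} (hy : y ≠ 0) (hy1 : y ⬝ᵥ Q *ᵥ y ≤ 1) :
    closedLoop A D B K y ⬝ᵥ Q *ᵥ closedLoop A D B K y < y ⬝ᵥ Q *ᵥ y := by
  have hε₁ := eps₁_pos_of_posDef_neg_dataBlockMat5 hS
  obtain ⟨i, -⟩ := Function.ne_iff.1 hy
  have hε₂ := eps₂_pos_of_posDef_neg_dataBlockMat5 hS i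
  have hDd := mulVec_dotProduct_mulVec_self_le
    (by rwa [← conjTranspose_eq_transpose_of_trivial, l2_opNorm_conjTranspose] : ‖Dᵀ‖ ≤ δ)
    (Q *ᵥ closedLoop A D B K y)
  have hineq := closedLoop_dataBlockMat5_ineq hS hδ hPQ hKP hX₁ hy
  have hmul : ε₁ * δ ^ 2 * (closedLoop A D B K y ⬝ᵥ Q *ᵥ closedLoop A D B K y
      - y ⬝ᵥ Q *ᵥ y) < 0 := by
    nlinarith [mul_nonneg (mul_nonneg (sq_nonneg δ) (sq_nonneg ((K *ᵥ y) 0))) (sub_nonneg.2 hy1),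
      mul_nonneg (mul_pos hε₁ hε₂).le (sub_nonneg.2 hDd)]
  exact sub_neg.1 (neg_of_mul_neg_right hmul (by positivity))

theorem closedLoop_col {n : ℕ} (A D : Matrix (Fin n) (Fin n) ℝ) (B : Matrix (Fin n) (Fin 1) ℝ)
    (K : Matrix (Fin 1) (Fin n) ℝ) (y : Matrix (Fin n) (Fin 1) ℝ) :
    (fun i => (A * y + B * (K * y) + D * y * (K * y)) i 0) =
      closedLoop A D B K fun i => y i 0 := by
  ext i
  simp [closedLoop, Matrix.mul_apply, mulVec, dotProduct, Finset.mul_sum, mul_comm, mul_left_comm]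

theorem dataMatrix_shift_eq {n T : ℕ} {A D : Matrix (Fin n) (Fin n) ℝ}
    {B : Matrix (Fin n) (Fin 1) ℝ} {u : ℕ → ℝ} {x : ℕ → Matrix (Fin n) (Fin 1) ℝ}
    (hdyn : ∀ t < T, x (t + 1) = A * x t + u t • B + u t • (D * x t)) :
    (Matrix.of fun i (t : Fin T) => x (t + 1) i 0) =
      A * (Matrix.of fun i (t : Fin T) => x t i 0)
        + B * (Matrix.of fun (_ : Fin 1) (t : Fin T) => u t)
        + D * Matrix.of fun i (t : Fin T) => x t i 0 * u t := by
  ext i t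
  simp [hdyn t t.isLt, Matrix.mul_apply, Finset.mul_sum, mul_comm, mul_left_comm]

theorem data_based_asymptotic_stability_general {n T : ℕ}
    (A : Matrix (Fin n) (Fin n) ℝ) (B : Matrix (Fin n) (Fin 1) ℝ)
    (D : Matrix (Fin n) (Fin n) ℝ)
    (δ : ℝ) (hδ : 0 < δ) (hD : ‖D‖ ≤ δ)
    (u : ℕ → ℝ) (x : ℕ → Matrix (Fin n) (Fin 1) ℝ)
    (hdyn : ∀ t < T, x (t + 1) = A * x t + u t • B + u t • (D * x t))
    (U₀ : Matrix (Fin 1) (Fin T) ℝ)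
    (hU₀ : U₀ = Matrix.of fun (_ : Fin 1) (t : Fin T) => u t)
    (X₀ : Matrix (Fin n) (Fin T) ℝ)
    (hX₀ : X₀ = Matrix.of fun (i : Fin n) (t : Fin T) => x t i 0)
    (X₁ : Matrix (Fin n) (Fin T) ℝ)
    (hX₁ : X₁ = Matrix.of fun (i : Fin n) (t : Fin T) => x (t + 1) i 0)
    (V₀ : Matrix (Fin n) (Fin T) ℝ)
    (hV₀ : V₀ = Matrix.of fun (i : Fin n) (t : Fin T) => x t i 0 * u t)
    (ε₁ ε₂ : ℝ) (Y : Matrix (Fin n) (Fin T) ℝ)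
    (P : Matrix (Fin n) (Fin n) ℝ)
    (hblock : (-(dataBlockMat5 P Y U₀ X₁ V₀ δ ε₁ ε₂)).PosDef)
    (hP : P = X₀ * Yᵀ)
    (Q : Matrix (Fin n) (Fin n) ℝ) (hQ : Q = P⁻¹)
    (K : Matrix (Fin 1) (Fin n) ℝ) (hK : K = U₀ * Yᵀ * (X₀ * Yᵀ)⁻¹)
    (f : Matrix (Fin n) (Fin 1) ℝ → Matrix (Fin n) (Fin 1) ℝ)
    (hf : ∀ y : Matrix (Fin n) (Fin 1) ℝ, f y = A * y + B * (K * y) + D * y * (K * y))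
    (E : Set (Matrix (Fin n) (Fin 1) ℝ))
    (hE : E = {y : Matrix (Fin n) (Fin 1) ℝ | (yᵀ * Q * y) 0 0 ≤ 1}) :
    -- (a) Lyapunov stability of the origin for the closed-loop system
    (∀ ε > (0 : ℝ), ∃ η > (0 : ℝ),
      ∀ z : ℕ → Matrix (Fin n) (Fin 1) ℝ, (∀ t : ℕ, z (t + 1) = f (z t)) →
        ‖z 0‖ < η → ∀ t : ℕ, ‖z t‖ < ε) ∧
    -- (b) every solution starting in ℰ_Q stays in ℰ_Q and converges to the origin
    (∀ z : ℕ → Matrix (Fin n) (Fin 1) ℝ, (∀ t : ℕ, z (t + 1) = f (z t)) →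
      z 0 ∈ E → (∀ t : ℕ, z t ∈ E) ∧ Tendsto z atTop (𝓝 0)) := by
  have hPpos := posDef_of_posDef_neg_dataBlockMat5 hblock
  have hPdet : IsUnit P.det := hPpos.det_pos.ne'.isUnit
  have hPQ : P * Q = 1 := hQ ▸ P.mul_nonsing_inv hPdet
  have hKP : U₀ * Yᵀ = K * P := by
    rw [hK, ← hP, Matrix.mul_assoc, P.nonsing_inv_mul hPdet, Matrix.mul_one]
  have hX₁Y : X₁ * Yᵀ = A * P + B * (K * P) + D * (V₀ * Yᵀ) := by
    rw [hX₁, dataMatrix_shift_eq hdyn, ← hX₀, ← hU₀, ← hV₀, Matrix.add_mul, Matrix.add_mul,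
      Matrix.mul_assoc, Matrix.mul_assoc, Matrix.mul_assoc, ← hP, hKP]
  obtain ⟨c, hc, hcV⟩ := (hQ ▸ hPpos.inv : Q.PosDef).exists_pos_mul_sq_le
  subst hE
  refine stable_and_attractive_of_lyapunov
    (V := fun y : Matrix (Fin n) (Fin 1) ℝ => (yᵀ * Q * y) 0 0)
    (by rw [funext hf]; fun_prop) (by fun_prop) hc hcV (by simp) (by simp [hf])
    fun y hy1 hy0 => ?_
  simp only [hf, Matrix.transpose_mul_mul_col, closedLoop_col] at hy1 ⊢
  exact closedLoop_quadForm_lt hblock hδ hD hPQ hKP hX₁Y (Matrix.col_ne_zero hy0) hy1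

/-- Proposition 1, part (ii): the data-based LMI yields a controller such that
the origin is asymptotically stable for the closed loop, with basin of
attraction containing the ellipsoid `ℰ_Q`. -/
theorem data_based_asymptotic_stability {n T : ℕ} (hn : 0 < n) (hT : 0 < T)
    (A : Matrix (Fin n) (Fin n) ℝ) (B : Matrix (Fin n) (Fin 1) ℝ)
    (D : Matrix (Fin n) (Fin n) ℝ)
    (δ : ℝ) (hδ : 0 < δ) (hD : ‖D‖ ≤ δ)
    (u : ℕ → ℝ) (x : ℕ → Matrix (Fin n) (Fin 1) ℝ)
    (hdyn : ∀ t < T, x (t + 1) = A * x t + u t • B + u t • (D * x t))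
    (U₀ : Matrix (Fin 1) (Fin T) ℝ)
    (hU₀ : U₀ = Matrix.of fun (_ : Fin 1) (t : Fin T) => u t)
    (X₀ : Matrix (Fin n) (Fin T) ℝ)
    (hX₀ : X₀ = Matrix.of fun (i : Fin n) (t : Fin T) => x t i 0)
    (X₁ : Matrix (Fin n) (Fin T) ℝ)
    (hX₁ : X₁ = Matrix.of fun (i : Fin n) (t : Fin T) => x (t + 1) i 0)
    (V₀ : Matrix (Fin n) (Fin T) ℝ)
    (hV₀ : V₀ = Matrix.of fun (i : Fin n) (t : Fin T) => x t i 0 * u t)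
    (ε₁ ε₂ : ℝ) (Y : Matrix (Fin n) (Fin T) ℝ)
    (P : Matrix (Fin n) (Fin n) ℝ) (hPsym : P = Pᵀ)
    (hblock : (-(dataBlockMat5 P Y U₀ X₁ V₀ δ ε₁ ε₂)).PosDef)
    (hP : P = X₀ * Yᵀ)
    (Q : Matrix (Fin n) (Fin n) ℝ) (hQ : Q = P⁻¹)
    (K : Matrix (Fin 1) (Fin n) ℝ) (hK : K = U₀ * Yᵀ * (X₀ * Yᵀ)⁻¹)
    (f : Matrix (Fin n) (Fin 1) ℝ → Matrix (Fin n) (Fin 1) ℝ)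
    (hf : ∀ y : Matrix (Fin n) (Fin 1) ℝ, f y = A * y + B * (K * y) + D * y * (K * y))
    (E : Set (Matrix (Fin n) (Fin 1) ℝ))
    (hE : E = {y : Matrix (Fin n) (Fin 1) ℝ | (yᵀ * Q * y) 0 0 ≤ 1}) :
    -- (a) Lyapunov stability of the origin for the closed-loop system
    (∀ ε > (0 : ℝ), ∃ η > (0 : ℝ),
      ∀ z : ℕ → Matrix (Fin n) (Fin 1) ℝ, (∀ t : ℕ, z (t + 1) = f (z t)) →
        ‖z 0‖ < η → ∀ t : ℕ, ‖z t‖ < ε) ∧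
    -- (b) every solution starting in ℰ_Q stays in ℰ_Q and converges to the origin
    (∀ z : ℕ → Matrix (Fin n) (Fin 1) ℝ, (∀ t : ℕ, z (t + 1) = f (z t)) →
      z 0 ∈ E → (∀ t : ℕ, z t ∈ E) ∧ Tendsto z atTop (𝓝 0)) :=
  data_based_asymptotic_stability_general A B D δ hδ hD u x hdyn U₀ hU₀ X₀ hX₀ X₁ hX₁ V₀ hV₀ ε₁ ε₂ Y
    P hblock hP Q hQ K hK f hf E hE
end

section
/- (Corollary 2, part (i).) Let μ ∈ (0,1). Suppose ‖D‖ ≤ δ for a known δ > 0, and suppose there exist ε₁ ∈ ℝ, ε₂ ∈ ℝ, Y ∈ ℝ^{n×T}, and P = Pᵀ ∈ ℝ^{n×n} such that the block matrix [[−μP, 0, Y U_{0,T}ᵀ, Y X_{1,T}ᵀ, −δ Y V_{0,T}ᵀ], [0, −ε₁P, 0, 0, δε₁P], [U_{0,T} Yᵀ, 0, −ε₁I, 0, 0], [X_{1,T} Yᵀ, 0, 0, −P + ε₂I, 0], [−δ V_{0,T} Yᵀ, δε₁P, 0, 0, −ε₂I]] is negative definite and P = X_{0,T} Yᵀ. Set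 Q := P⁻¹, K := U_{0,T} Yᵀ (X_{0,T} Yᵀ)⁻¹, and f(x) := A x + B (K x) + D x (K x). Then the Lyapunov function V(x) := xᵀ Q x satisfies V(f(x)) < μ V(x) for all x ∈ ℰ_Q \ {0}, where ℰ_Q := {x ∈ ℝⁿ : xᵀ Q x ≤ 1}. -/
open Matrix
open scoped Matrix.Norms.L2Operator

/-!
Evaluate the quadratic form of the block matrix at `(z, (s/ε₁) z, s/ε₁, Q f(y), (δ/ε₂) w)`, where
`z = Q y`, `s = K y` and `w = s y - V₀ Yᵀ Q y`. The data equation `X₁ = A X₀ + B U₀ + D V₀` together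
with `X₀ Yᵀ Q = 1` gives `X₁ Yᵀ Q = A + B K + D V₀ Yᵀ Q`, hence `f(y) = X₁ Yᵀ Q y + D w`, and the
form collapses to
`V(f y) - μ V(y) + (s²/ε₁)(1 - V(y)) + (ε₂ ‖Q f(y)‖² - 2 ⟪Q f(y), D w⟫ + (δ²/ε₂) ‖w‖²)`.
This is negative because the block matrix is negative definite, while the second summand is
nonnegative on `ℰ_Q` and the last one by Young's inequality and `‖D‖ ≤ δ`.
-/

/-- The data-based 5×5 block matrix with `(1,1)` block `−μP`, blocks of sizes
`[n, n, 1, n, n]`: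
`[[−μP, 0, Y U₀ᵀ, Y X₁ᵀ, −δ Y V₀ᵀ], [0, −ε₁P, 0, 0, δε₁P], [U₀ Yᵀ, 0, −ε₁I, 0, 0],
[X₁ Yᵀ, 0, 0, −P + ε₂I, 0], [−δ V₀ Yᵀ, δε₁P, 0, 0, −ε₂I]]`. -/
def dataBlockMat5Mu {n T : ℕ} (μ : ℝ)
    (P : Matrix (Fin n) (Fin n) ℝ) (Y : Matrix (Fin n) (Fin T) ℝ)
    (U₀ : Matrix (Fin 1) (Fin T) ℝ) (X₁ V₀ : Matrix (Fin n) (Fin T) ℝ)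
    (δ ε₁ ε₂ : ℝ) :
    Matrix (((Fin n ⊕ Fin n) ⊕ (Fin 1 ⊕ Fin n)) ⊕ Fin n)
      (((Fin n ⊕ Fin n) ⊕ (Fin 1 ⊕ Fin n)) ⊕ Fin n) ℝ :=
  Matrix.fromBlocks
    (Matrix.fromBlocks
      (Matrix.fromBlocks (-(μ • P)) 0 0 (-(ε₁ • P)))
      (Matrix.fromBlocks (Y * U₀ᵀ) (Y * X₁ᵀ) 0 0)
      (Matrix.fromBlocks (U₀ * Yᵀ) 0 (X₁ * Yᵀ) 0)
      (Matrix.fromBlocks (-(ε₁ • (1 : Matrix (Fin 1) (Fin 1) ℝ))) 0 0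
        (-P + ε₂ • (1 : Matrix (Fin n) (Fin n) ℝ))))
    (Matrix.fromRows
      (Matrix.fromRows (-(δ • (Y * V₀ᵀ))) ((δ * ε₁) • P))
      (Matrix.fromRows (0 : Matrix (Fin 1) (Fin n) ℝ) (0 : Matrix (Fin n) (Fin n) ℝ)))
    (Matrix.fromCols
      (Matrix.fromCols (-(δ • (V₀ * Yᵀ))) ((δ * ε₁) • P))
      (Matrix.fromCols (0 : Matrix (Fin n) (Fin 1) ℝ) (0 : Matrix (Fin n) (Fin n) ℝ)))
    (-(ε₂ • (1 : Matrix (Fin n) (Fin n) ℝ)))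

namespace Matrix

variable {ι m n R : Type*} [Fintype m] [Fintype n]

theorem transpose_mul_mul_apply [CommSemiring R] (y : Matrix n ι R) (M : Matrix n n R) (i j : ι) :
    (yᵀ * M * y) i j = yᵀ i ⬝ᵥ M *ᵥ yᵀ j := by
  simp only [Matrix.mul_apply, dotProduct, mulVec, transpose_apply, Finset.mul_sum, Finset.sum_mul]
  rw [Finset.sum_comm]
  simp only [mul_assoc]

variable [DecidableEq n]

theorem dotProduct_mulVec_self_le (D : Matrix m n ℝ) (w : n → ℝ) :
    D *ᵥ w ⬝ᵥ D *ᵥ w ≤ ‖D‖ ^ 2 * (w ⬝ᵥ w) := by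
  have h := D.l2_opNorm_mulVec (WithLp.toLp 2 w)
  rw [← sq_le_sq₀ (norm_nonneg _) (by positivity), mul_pow, EuclideanSpace.real_norm_sq_eq,
    EuclideanSpace.real_norm_sq_eq] at h
  simpa [dotProduct, sq] using h

theorem two_mul_dotProduct_mulVec_le {D : Matrix m n ℝ} {ε δ : ℝ} (hε : 0 < ε) (hD : ‖D‖ ≤ δ)
    (z : m → ℝ) (w : n → ℝ) :
    2 * (z ⬝ᵥ D *ᵥ w) ≤ ε * (z ⬝ᵥ z) + δ ^ 2 / ε * (w ⬝ᵥ w) := by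
  have hsq : 0 ≤ (ε • z - D *ᵥ w) ⬝ᵥ (ε • z - D *ᵥ w) := dotProduct_self_star_nonneg _
  have hDw : D *ᵥ w ⬝ᵥ D *ᵥ w ≤ δ ^ 2 * (w ⬝ᵥ w) :=
    (dotProduct_mulVec_self_le D w).trans <| by
      gcongr
      exact dotProduct_self_star_nonneg w
  simp only [sub_dotProduct, dotProduct_sub, smul_dotProduct, dotProduct_smul, smul_eq_mul,
    dotProduct_comm (D *ᵥ w) z] at hsq
  have hscaled : ε * (2 * (z ⬝ᵥ D *ᵥ w)) ≤ ε * (ε * (z ⬝ᵥ z) + δ ^ 2 / ε * (w ⬝ᵥ w)) := by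
    rw [mul_add, ← mul_assoc ε (δ ^ 2 / ε), mul_div_cancel₀ _ hε.ne']
    linarith
  exact le_of_mul_le_mul_left hscaled hε

end Matrix

theorem sumElim_dotProduct_dataBlockMat5Mu_mulVec {n T : ℕ} (μ : ℝ)
    (P : Matrix (Fin n) (Fin n) ℝ) (Y : Matrix (Fin n) (Fin T) ℝ)
    (U₀ : Matrix (Fin 1) (Fin T) ℝ) (X₁ V₀ : Matrix (Fin n) (Fin T) ℝ)
    (δ ε₁ ε₂ : ℝ) (z₁ z₂ : Fin n → ℝ) (z₃ : Fin 1 → ℝ) (z₄ z₅ : Fin n → ℝ) :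
    let z := Sum.elim (Sum.elim (Sum.elim z₁ z₂) (Sum.elim z₃ z₄)) z₅
    z ⬝ᵥ dataBlockMat5Mu μ P Y U₀ X₁ V₀ δ ε₁ ε₂ *ᵥ z =
      -μ * (z₁ ⬝ᵥ P *ᵥ z₁) - ε₁ * (z₂ ⬝ᵥ P *ᵥ z₂) + 2 * (z₃ ⬝ᵥ (U₀ * Yᵀ) *ᵥ z₁)
        + 2 * (z₄ ⬝ᵥ (X₁ * Yᵀ) *ᵥ z₁) - 2 * δ * (z₅ ⬝ᵥ (V₀ * Yᵀ) *ᵥ z₁)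
        + δ * ε₁ * (z₂ ⬝ᵥ P *ᵥ z₅ + z₅ ⬝ᵥ P *ᵥ z₂)
        - ε₁ * (z₃ ⬝ᵥ z₃) - z₄ ⬝ᵥ P *ᵥ z₄ + ε₂ * (z₄ ⬝ᵥ z₄) - ε₂ * (z₅ ⬝ᵥ z₅) := by
  simp only [dataBlockMat5Mu, fromBlocks_mulVec, fromRows_mulVec, fromCols_mulVec, fromRows_zero,
    fromCols_zero, Sum.elim_comp_inl, Sum.elim_comp_inr, sumElim_dotProduct_sumElim, add_mulVec,
    neg_mulVec, smul_mulVec, zero_mulVec, one_mulVec, add_zero, zero_add, dotProduct_add,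
    dotProduct_neg, dotProduct_smul, dotProduct_zero, smul_eq_mul, neg_mul]
  rw [dotProduct_mulVec z₁ (Y * U₀ᵀ), dotProduct_mulVec z₁ (Y * X₁ᵀ),
    dotProduct_mulVec z₁ (Y * V₀ᵀ)]
  simp only [← mulVec_transpose, transpose_mul, transpose_transpose, dotProduct_comm _ z₃,
    dotProduct_comm _ z₄, dotProduct_comm _ z₅]
  ring

section

variable {n T : ℕ} {μ δ ε₁ ε₂ : ℝ} {P : Matrix (Fin n) (Fin n) ℝ} {Y : Matrix (Fin n) (Fin T) ℝ}
  {U₀ : Matrix (Fin 1) (Fin T) ℝ} {X₁ V₀ : Matrix (Fin n) (Fin T) ℝ}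

theorem ε₁_pos_of_neg_dataBlockMat5Mu (h : (-dataBlockMat5Mu μ P Y U₀ X₁ V₀ δ ε₁ ε₂).PosDef) :
    0 < ε₁ := by
  simpa [dataBlockMat5Mu] using h.diag_pos (i := Sum.inl (Sum.inr (Sum.inl 0)))

theorem ε₂_pos_of_neg_dataBlockMat5Mu [Nonempty (Fin n)]
    (h : (-dataBlockMat5Mu μ P Y U₀ X₁ V₀ δ ε₁ ε₂).PosDef) : 0 < ε₂ := by
  simpa [dataBlockMat5Mu] using h.diag_pos (i := Sum.inr (Classical.arbitrary _))

theorem posDef_of_neg_dataBlockMat5Mu (h : (-dataBlockMat5Mu μ P Y U₀ X₁ V₀ δ ε₁ ε₂).PosDef) :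
    P.PosDef := by
  have hε₁ := ε₁_pos_of_neg_dataBlockMat5Mu h
  have hε₁P : (ε₁ • P).PosDef := by
    convert h.submatrix (e := Sum.inl ∘ Sum.inl ∘ Sum.inr)
      (Sum.inl_injective.comp (Sum.inl_injective.comp Sum.inr_injective)) using 1
    ext i j
    simp [dataBlockMat5Mu]
  simpa [smul_smul, hε₁.ne'] using hε₁P.smul (inv_pos.2 hε₁)

theorem sumElim_dotProduct_dataBlockMat5Mu_mulVec_of_closedLoop (D : Matrix (Fin n) (Fin n) ℝ)
    (hP : Pᵀ = P) (hε₁ : ε₁ ≠ 0) (hε₂ : ε₂ ≠ 0) {z₁ z₄ w : Fin n → ℝ} {s : ℝ}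
    (hU : (U₀ * Yᵀ) *ᵥ z₁ = fun _ => s) (hX : (X₁ * Yᵀ) *ᵥ z₁ = P *ᵥ z₄ - D *ᵥ w)
    (hV : (V₀ * Yᵀ) *ᵥ z₁ = s • P *ᵥ z₁ - w) :
    let z := Sum.elim (Sum.elim (Sum.elim z₁ ((s / ε₁) • z₁))
      (Sum.elim (fun _ => s / ε₁) z₄)) ((δ / ε₂) • w)
    z ⬝ᵥ dataBlockMat5Mu μ P Y U₀ X₁ V₀ δ ε₁ ε₂ *ᵥ z =
      z₄ ⬝ᵥ P *ᵥ z₄ - μ * (z₁ ⬝ᵥ P *ᵥ z₁) + s ^ 2 / ε₁ * (1 - z₁ ⬝ᵥ P *ᵥ z₁)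
        + (ε₂ * (z₄ ⬝ᵥ z₄) - 2 * (z₄ ⬝ᵥ D *ᵥ w) + δ ^ 2 / ε₂ * (w ⬝ᵥ w)) := by
  have hPw : w ⬝ᵥ P *ᵥ z₁ = z₁ ⬝ᵥ P *ᵥ w := by
    rw [dotProduct_mulVec, ← mulVec_transpose, hP, dotProduct_comm]
  simp only [sumElim_dotProduct_dataBlockMat5Mu_mulVec, hU, hX, hV, mulVec_smul, dotProduct_smul,
    smul_dotProduct, smul_eq_mul, dotProduct_sub, hPw]
  simp only [dotProduct, Fin.sum_univ_one]
  field_simp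
  ring

theorem dotProduct_mulVec_lt_of_neg_dataBlockMat5Mu {D : Matrix (Fin n) (Fin n) ℝ}
    (h : (-dataBlockMat5Mu μ P Y U₀ X₁ V₀ δ ε₁ ε₂).PosDef) (hD : ‖D‖ ≤ δ)
    {z₁ z₄ w : Fin n → ℝ} {s : ℝ}
    (hU : (U₀ * Yᵀ) *ᵥ z₁ = fun _ => s) (hX : (X₁ * Yᵀ) *ᵥ z₁ = P *ᵥ z₄ - D *ᵥ w)
    (hV : (V₀ * Yᵀ) *ᵥ z₁ = s • P *ᵥ z₁ - w) (hz : z₁ ≠ 0) (hq : z₁ ⬝ᵥ P *ᵥ z₁ ≤ 1) :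
    z₄ ⬝ᵥ P *ᵥ z₄ < μ * (z₁ ⬝ᵥ P *ᵥ z₁) := by
  obtain ⟨i, -⟩ := Function.ne_iff.1 hz
  have : Nonempty (Fin n) := ⟨i⟩
  have hε₁ := ε₁_pos_of_neg_dataBlockMat5Mu h
  have hε₂ := ε₂_pos_of_neg_dataBlockMat5Mu h
  have hP : Pᵀ = P := (posDef_of_neg_dataBlockMat5Mu h).isHermitian
  have hneg := h.dotProduct_mulVec_pos
    (x := Sum.elim (Sum.elim (Sum.elim z₁ ((s / ε₁) • z₁)) (Sum.elim (fun _ => s / ε₁) z₄))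
      ((δ / ε₂) • w))
    fun h0 => hz (funext fun j => congrFun h0 (Sum.inl (Sum.inl (Sum.inl j))))
  rw [star_trivial, neg_mulVec, dotProduct_neg,
    sumElim_dotProduct_dataBlockMat5Mu_mulVec_of_closedLoop D hP hε₁.ne' hε₂.ne' hU hX hV] at hneg
  have hYoung := two_mul_dotProduct_mulVec_le hε₂ hD z₄ w
  have hslack : 0 ≤ s ^ 2 / ε₁ * (1 - z₁ ⬝ᵥ P *ᵥ z₁) := by
    have := sub_nonneg.2 hq
    positivity
  linarith

end

theorem of_succ_eq_of_dynamics {m : Type*} [Fintype m] {T : ℕ} {A D : Matrix m m ℝ}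
    {B : Matrix m (Fin 1) ℝ} {u : ℕ → ℝ} {x : ℕ → Matrix m (Fin 1) ℝ}
    (hdyn : ∀ t < T, x (t + 1) = A * x t + u t • B + u t • (D * x t)) :
    (of fun i (t : Fin T) => x (t + 1) i 0 : Matrix m (Fin T) ℝ) =
      A * (of fun i (t : Fin T) => x t i 0 : Matrix m (Fin T) ℝ) +
        B * (of fun _ (t : Fin T) => u t : Matrix (Fin 1) (Fin T) ℝ) +
        D * (of fun i (t : Fin T) => x t i 0 * u t : Matrix m (Fin T) ℝ) := by
  ext i t
  simp only [of_apply, hdyn t t.isLt, Matrix.add_apply, Matrix.smul_apply, Matrix.mul_apply,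
    Fin.sum_univ_one, smul_eq_mul, Finset.mul_sum]
  rw [mul_comm (B i 0)]
  congr 1
  exact Finset.sum_congr rfl fun j _ => by ring

theorem mul_eq_add_of_mul_eq_one {l m n : Type*} [Fintype l] [Fintype m] [Fintype n]
    [DecidableEq n] {A : Matrix n n ℝ} {B : Matrix n m ℝ} {D : Matrix n n ℝ}
    {X₀ X₁ V₀ : Matrix n l ℝ} {U₀ : Matrix m l ℝ} {R : Matrix l n ℝ}
    (h : X₁ = A * X₀ + B * U₀ + D * V₀) (hR : X₀ * R = 1) :
    X₁ * R = A + B * (U₀ * R) + D * (V₀ * R) := by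
  rw [h, Matrix.add_mul, Matrix.add_mul, Matrix.mul_assoc, hR, Matrix.mul_one, Matrix.mul_assoc,
    Matrix.mul_assoc]

theorem transpose_closedLoop_apply_zero {m : Type*} [Fintype m] (A D : Matrix m m ℝ)
    (B : Matrix m (Fin 1) ℝ) (K : Matrix (Fin 1) m ℝ) (y : Matrix m (Fin 1) ℝ) :
    (A * y + B * (K * y) + D * y * (K * y))ᵀ 0 =
      A *ᵥ yᵀ 0 + B *ᵥ K *ᵥ yᵀ 0 + (K *ᵥ yᵀ 0) 0 • D *ᵥ yᵀ 0 := by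
  ext i
  simp only [transpose_apply, Matrix.add_apply, Pi.add_apply, Pi.smul_apply, smul_eq_mul,
    Matrix.mul_apply, mulVec, dotProduct, Fin.sum_univ_one]
  ring

theorem data_based_exponential_decrease_general {n T : ℕ} (μ : ℝ)
    (A : Matrix (Fin n) (Fin n) ℝ) (B : Matrix (Fin n) (Fin 1) ℝ)
    (D : Matrix (Fin n) (Fin n) ℝ)
    (δ : ℝ) (hD : ‖D‖ ≤ δ)
    (u : ℕ → ℝ) (x : ℕ → Matrix (Fin n) (Fin 1) ℝ)
    (hdyn : ∀ t < T, x (t + 1) = A * x t + u t • B + u t • (D * x t))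
    (U₀ : Matrix (Fin 1) (Fin T) ℝ)
    (hU₀ : U₀ = Matrix.of fun (_ : Fin 1) (t : Fin T) => u t)
    (X₀ : Matrix (Fin n) (Fin T) ℝ)
    (hX₀ : X₀ = Matrix.of fun (i : Fin n) (t : Fin T) => x t i 0)
    (X₁ : Matrix (Fin n) (Fin T) ℝ)
    (hX₁ : X₁ = Matrix.of fun (i : Fin n) (t : Fin T) => x (t + 1) i 0)
    (V₀ : Matrix (Fin n) (Fin T) ℝ)
    (hV₀ : V₀ = Matrix.of fun (i : Fin n) (t : Fin T) => x t i 0 * u t)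
    (ε₁ ε₂ : ℝ) (Y : Matrix (Fin n) (Fin T) ℝ)
    (P : Matrix (Fin n) (Fin n) ℝ)
    (hblock : (-(dataBlockMat5Mu μ P Y U₀ X₁ V₀ δ ε₁ ε₂)).PosDef)
    (hP : P = X₀ * Yᵀ)
    (Q : Matrix (Fin n) (Fin n) ℝ) (hQ : Q = P⁻¹)
    (K : Matrix (Fin 1) (Fin n) ℝ) (hK : K = U₀ * Yᵀ * (X₀ * Yᵀ)⁻¹)
    (f : Matrix (Fin n) (Fin 1) ℝ → Matrix (Fin n) (Fin 1) ℝ)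
    (hf : ∀ y : Matrix (Fin n) (Fin 1) ℝ, f y = A * y + B * (K * y) + D * y * (K * y))
    (V : Matrix (Fin n) (Fin 1) ℝ → ℝ)
    (hV : ∀ y : Matrix (Fin n) (Fin 1) ℝ, V y = (yᵀ * Q * y) 0 0) :
    ∀ y : Matrix (Fin n) (Fin 1) ℝ, (yᵀ * Q * y) 0 0 ≤ 1 → y ≠ 0 →
      V (f y) < μ * V y := by
  intro y hy hy0
  have hPQ : P * Q = 1 := hQ ▸ P.mul_nonsing_inv <|
    P.isUnit_iff_isUnit_det.1 (posDef_of_neg_dataBlockMat5Mu hblock).isUnit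
  have hPQv (v : Fin n → ℝ) : P *ᵥ Q *ᵥ v = v := by rw [mulVec_mulVec, hPQ, one_mulVec]
  have hK' : K = U₀ * Yᵀ * Q := by rw [hK, ← hP, ← hQ]
  have hdata : X₁ = A * X₀ + B * U₀ + D * V₀ := by
    subst hX₁ hU₀ hX₀ hV₀
    exact of_succ_eq_of_dynamics hdyn
  have hclosed : X₁ * Yᵀ * Q = A + B * K + D * (V₀ * Yᵀ * Q) := by
    simpa only [Matrix.mul_assoc, hK'] using
      mul_eq_add_of_mul_eq_one (R := Yᵀ * Q) hdata (by rw [← Matrix.mul_assoc, ← hP, hPQ])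
  set a := yᵀ 0
  set s := (K *ᵥ a) 0
  have hKa : K *ᵥ a = fun _ => s := funext fun i => by rw [Subsingleton.elim i 0]
  have hX : (X₁ * Yᵀ) *ᵥ Q *ᵥ a =
      P *ᵥ Q *ᵥ (f y)ᵀ 0 - D *ᵥ (s • a - (V₀ * Yᵀ * Q) *ᵥ a) := by
    rw [mulVec_mulVec, hclosed, hPQv, hf, transpose_closedLoop_apply_zero]
    simp only [add_mulVec, mulVec_mulVec, mulVec_sub, mulVec_smul]
    abel
  have hV' : (V₀ * Yᵀ) *ᵥ Q *ᵥ a = s • P *ᵥ Q *ᵥ a - (s • a - (V₀ * Yᵀ * Q) *ᵥ a) := by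
    rw [hPQv, sub_sub_cancel, mulVec_mulVec]
  have hz : Q *ᵥ a ≠ 0 := by
    intro h0
    have ha : a = 0 := by rw [← hPQv a, h0, mulVec_zero]
    exact hy0 (ext fun i j => by rw [Subsingleton.elim j 0]; exact congrFun ha i)
  have hq : Q *ᵥ a ⬝ᵥ P *ᵥ Q *ᵥ a ≤ 1 := by
    rwa [hPQv, dotProduct_comm, ← transpose_mul_mul_apply]
  have hlt := dotProduct_mulVec_lt_of_neg_dataBlockMat5Mu hblock hD
    (by rw [mulVec_mulVec, ← hK', hKa]) hX hV' hz hq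
  rw [hPQv, hPQv, dotProduct_comm, dotProduct_comm (Q *ᵥ a)] at hlt
  rwa [hV, hV, transpose_mul_mul_apply, transpose_mul_mul_apply]

/-- Corollary 2, part (i): with the `(1,1)` block of the data-based LMI replaced
by `−μP`, the Lyapunov function satisfies `V(f(x)) < μ V(x)` on `ℰ_Q \ {0}`. -/
theorem data_based_exponential_decrease {n T : ℕ} (hn : 0 < n) (hT : 0 < T)
    (μ : ℝ) (hμ : μ ∈ Set.Ioo (0 : ℝ) 1)
    (A : Matrix (Fin n) (Fin n) ℝ) (B : Matrix (Fin n) (Fin 1) ℝ)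
    (D : Matrix (Fin n) (Fin n) ℝ)
    (δ : ℝ) (hδ : 0 < δ) (hD : ‖D‖ ≤ δ)
    (u : ℕ → ℝ) (x : ℕ → Matrix (Fin n) (Fin 1) ℝ)
    (hdyn : ∀ t < T, x (t + 1) = A * x t + u t • B + u t • (D * x t))
    (U₀ : Matrix (Fin 1) (Fin T) ℝ)
    (hU₀ : U₀ = Matrix.of fun (_ : Fin 1) (t : Fin T) => u t)
    (X₀ : Matrix (Fin n) (Fin T) ℝ)
    (hX₀ : X₀ = Matrix.of fun (i : Fin n) (t : Fin T) => x t i 0)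
    (X₁ : Matrix (Fin n) (Fin T) ℝ)
    (hX₁ : X₁ = Matrix.of fun (i : Fin n) (t : Fin T) => x (t + 1) i 0)
    (V₀ : Matrix (Fin n) (Fin T) ℝ)
    (hV₀ : V₀ = Matrix.of fun (i : Fin n) (t : Fin T) => x t i 0 * u t)
    (ε₁ ε₂ : ℝ) (Y : Matrix (Fin n) (Fin T) ℝ)
    (P : Matrix (Fin n) (Fin n) ℝ) (hPsym : P = Pᵀ)
    (hblock : (-(dataBlockMat5Mu μ P Y U₀ X₁ V₀ δ ε₁ ε₂)).PosDef)
    (hP : P = X₀ * Yᵀ)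
    (Q : Matrix (Fin n) (Fin n) ℝ) (hQ : Q = P⁻¹)
    (K : Matrix (Fin 1) (Fin n) ℝ) (hK : K = U₀ * Yᵀ * (X₀ * Yᵀ)⁻¹)
    (f : Matrix (Fin n) (Fin 1) ℝ → Matrix (Fin n) (Fin 1) ℝ)
    (hf : ∀ y : Matrix (Fin n) (Fin 1) ℝ, f y = A * y + B * (K * y) + D * y * (K * y))
    (V : Matrix (Fin n) (Fin 1) ℝ → ℝ)
    (hV : ∀ y : Matrix (Fin n) (Fin 1) ℝ, V y = (yᵀ * Q * y) 0 0) :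
    ∀ y : Matrix (Fin n) (Fin 1) ℝ, (yᵀ * Q * y) 0 0 ≤ 1 → y ≠ 0 →
      V (f y) < μ * V y :=
  data_based_exponential_decrease_general μ A B D δ hD u x hdyn U₀ hU₀ X₀ hX₀ X₁ hX₁ V₀ hV₀ ε₁ ε₂ Y
    P hblock hP Q hQ K hK f hf V hV
end

section
/- (Remark 2, two-input representation.) Consider the discrete-time bilinear system with two scalar inputs x⁺ = A x + B₁ u₁ + B₂ u₂ + D₁ x u₁ + D₂ x u₂, with A, D₁, D₂ ∈ ℝ^{n×n} and B₁, B₂ ∈ ℝ^{n×1}. Suppose the input sequences u₁(t), u₂(t), t = 0,…,T−1, and state sequence x(0),…,x(T) satisfy x(t+1) = A x(t) + B₁ u₁(t) + B₂ u₂(t) + D₁ x(t) u₁(t) + D₂ x(t) u₂(t). Let G_K ∈ ℝ^{T×n} satisfy X_{0,T} G_K = I, and define K := U_{0,T} G_K ∈ ℝ^{2×n} with U_{0,T} the 2×T matrix stacking U_{0,T}^{(1)} over U_{0,T}^{(2)}. Then for every x ∈ ℝⁿ, the closed-loop map with feedback (u₁, u₂) = K x satisfies A x + B₁ (K x)₁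 + B₂ (K x)₂ + D₁ x (K x)₁ + D₂ x (K x)₂ = (X_{1,T} − D₁ V_{0,T}^{(1)} − D₂ V_{0,T}^{(2)} + D₁ x U_{0,T}^{(1)} + D₂ x U_{0,T}^{(2)}) G_K x. -/
open Matrix

lemma mul_one_by_one {n : ℕ} (B : Matrix (Fin n) (Fin 1) ℝ)
    (M : Matrix (Fin 1) (Fin 1) ℝ) : B * M = M 0 0 • B := by
  ext i j
  fin_cases j
  simp [Matrix.mul_apply, Fin.sum_univ_one, mul_comm]
  ring

/-- Remark 2: data-based representation of the closed loop for the two-input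
bilinear system `x⁺ = A x + B₁ u₁ + B₂ u₂ + D₁ x u₁ + D₂ x u₂`, with
`U₀ ∈ ℝ^{2×T}` stacking `U₀⁽¹⁾` over `U₀⁽²⁾`, `X₀ G_K = I` and `K = U₀ G_K`. -/
theorem two_input_closed_loop_data_representation {n T : ℕ} (hn : 0 < n) (hT : 0 < T)
    (A : Matrix (Fin n) (Fin n) ℝ) (B₁ B₂ : Matrix (Fin n) (Fin 1) ℝ)
    (D₁ D₂ : Matrix (Fin n) (Fin n) ℝ)
    (u₁ u₂ : ℕ → ℝ) (x : ℕ → Matrix (Fin n) (Fin 1) ℝ)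
    (hdyn : ∀ t < T, x (t + 1) = A * x t + u₁ t • B₁ + u₂ t • B₂
      + u₁ t • (D₁ * x t) + u₂ t • (D₂ * x t))
    (U₁ : Matrix (Fin 1) (Fin T) ℝ)
    (hU₁ : U₁ = Matrix.of fun (_ : Fin 1) (t : Fin T) => u₁ t)
    (U₂ : Matrix (Fin 1) (Fin T) ℝ)
    (hU₂ : U₂ = Matrix.of fun (_ : Fin 1) (t : Fin T) => u₂ t)
    (U₀ : Matrix (Fin 2) (Fin T) ℝ)
    (hU₀ : U₀ = Matrix.of fun (i : Fin 2) (t : Fin T) => ![u₁ (t : ℕ), u₂ (t : ℕ)] i)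
    (X₀ : Matrix (Fin n) (Fin T) ℝ)
    (hX₀ : X₀ = Matrix.of fun (i : Fin n) (t : Fin T) => x t i 0)
    (X₁ : Matrix (Fin n) (Fin T) ℝ)
    (hX₁ : X₁ = Matrix.of fun (i : Fin n) (t : Fin T) => x (t + 1) i 0)
    (V₁ : Matrix (Fin n) (Fin T) ℝ)
    (hV₁ : V₁ = Matrix.of fun (i : Fin n) (t : Fin T) => x t i 0 * u₁ t)
    (V₂ : Matrix (Fin n) (Fin T) ℝ)
    (hV₂ : V₂ = Matrix.of fun (i : Fin n) (t : Fin T) => x t i 0 * u₂ t)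
    (G_K : Matrix (Fin T) (Fin n) ℝ) (hG : X₀ * G_K = 1)
    (K : Matrix (Fin 2) (Fin n) ℝ) (hK : K = U₀ * G_K) :
    ∀ y : Matrix (Fin n) (Fin 1) ℝ,
      A * y + ((K * y) 0 0) • B₁ + ((K * y) 1 0) • B₂
          + ((K * y) 0 0) • (D₁ * y) + ((K * y) 1 0) • (D₂ * y)
        = (X₁ - D₁ * V₁ - D₂ * V₂ + D₁ * y * U₁ + D₂ * y * U₂) * G_K * y := by
  intro y
  have hXdata : X₁ = A * X₀ + B₁ * U₁ + B₂ * U₂ + D₁ * V₁ + D₂ * V₂ := by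
    ext i t
    have hd := hdyn t t.isLt
    have h := congrArg (fun M : Matrix (Fin n) (Fin 1) ℝ => M i 0) hd
    simp only [Matrix.add_apply, Matrix.smul_apply, smul_eq_mul] at h
    simp only [hX₁, hX₀, hU₁, hU₂, hV₁, hV₂, Matrix.of_apply, Matrix.add_apply,
      Matrix.mul_apply, Fin.sum_univ_one]
    rw [h]
    simp only [Matrix.mul_apply]
    simp [Finset.mul_sum, mul_comm, mul_left_comm, mul_assoc]
  have hU₁K : U₁ * G_K * y = Matrix.of fun (_ : Fin 1) (_ : Fin 1) => (K * y) 0 0 := by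
    ext i j
    fin_cases i; fin_cases j
    simp [hK, hU₁, hU₀, Matrix.mul_apply]
  have hU₂K : U₂ * G_K * y = Matrix.of fun (_ : Fin 1) (_ : Fin 1) => (K * y) 1 0 := by
    ext i j
    fin_cases i; fin_cases j
    simp [hK, hU₂, hU₀, Matrix.mul_apply]
  have expand : (X₁ - D₁ * V₁ - D₂ * V₂ + D₁ * y * U₁ + D₂ * y * U₂) * G_K * y
      = A * (X₀ * G_K) * y + B₁ * (U₁ * G_K * y) + B₂ * (U₂ * G_K * y)
        + (D₁ * y) * (U₁ * G_K * y) + (D₂ * y) * (U₂ * G_K * y) := by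
    rw [hXdata]
    simp only [Matrix.sub_mul, Matrix.add_mul, Matrix.mul_assoc]
    abel
  rw [expand, hG, Matrix.mul_one, hU₁K, hU₂K, mul_one_by_one, mul_one_by_one,
    mul_one_by_one, mul_one_by_one]
  simp
end
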